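/- arXiv:2111.04035 — 7 statements merged into one kernel-verified Lean document; each statement's English description precedes it below -/
import Mathlib

section
/- The collection of independent sets of a matroid satisfies the symmetric exchange axiom: if I₁ and I₂ are independent sets and x ∈ I₁ △ I₂, then there exists y ∈ I₁ △ I₂ such that I₁ △ {x,y} is independent. -/
open Set
open scoped symmDiff

/-- The symmetric exchange axiom for a collection of subsets. -/
def SymExch {α : Type*} (𝓕 : Set (Set α)) : Prop :=
  ∀ ⦃F₁⦄, F₁ ∈ 𝓕 → ∀ ⦃F₂⦄, F₂ ∈ 𝓕 →
    ∀ x ∈ F₁ ∆ F₂, ∃ y ∈ F₁ ∆ F₂, F₁ ∆ ({x, y} : Set α) ∈ 𝓕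

/-- A Δ-matroid on a finite ground set. -/
structure DeltaMatroid (α : Type*) where
  E : Set α
  Feasible : Set (Set α)
  ground_finite : E.Finite
  subset_ground : ∀ F ∈ Feasible, F ⊆ E
  feasible_nonempty : Feasible.Nonempty
  exchange : SymExch Feasible

/-- A lower base: a feasible set of minimum cardinality. -/
def DeltaMatroid.LowerBase {α : Type*} (D : DeltaMatroid α) (B : Set α) : Prop :=
  B ∈ D.Feasible ∧ ∀ F ∈ D.Feasible, B.ncard ≤ F.ncard

/-- An upper base: a feasible set of maximum cardinality. -/
def DeltaMatroid.UpperBase {α : Type*} (D : DeltaMatroid α) (B : Set α) : Prop :=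
  B ∈ D.Feasible ∧ ∀ F ∈ D.Feasible, F.ncard ≤ B.ncard

/-- A circuit of a matroid: a minimal dependent set. -/
def Matroid.IsCircuit' {α : Type*} (M : Matroid α) (C : Set α) : Prop :=
  C ⊆ M.E ∧ ¬ M.Indep C ∧ ∀ D, D ⊂ C → M.Indep D

/-- Every circuit of `Mu` is a union of circuits of `Ml`. -/
def CircuitsUnion {α : Type*} (Mu Ml : Matroid α) : Prop :=
  ∀ C, Mu.IsCircuit' C → ∃ 𝒞 : Set (Set α), (∀ C' ∈ 𝒞, Ml.IsCircuit' C') ∧ C = ⋃₀ 𝒞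

/-- `M` is the upper matroid of the Δ-matroid `D`. -/
def IsUpperMatroid {α : Type*} (D : DeltaMatroid α) (M : Matroid α) : Prop :=
  M.E = D.E ∧ ∀ B, M.IsBase B ↔ D.UpperBase B

/-- `M` is the lower matroid of the Δ-matroid `D`. -/
def IsLowerMatroid {α : Type*} (D : DeltaMatroid α) (M : Matroid α) : Prop :=
  M.E = D.E ∧ ∀ B, M.IsBase B ↔ D.LowerBase B

/-- the independent sets of a matroid satisfy the symmetric exchange axiom. -/
theorem indep_symExch {α : Type*} (M : Matroid α) (hfin : M.E.Finite) :
    SymExch {I : Set α | M.Indep I} := by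
  intro I₁ h₁ I₂ h₂ x hx
  simp only [Set.mem_setOf_eq] at h₁ h₂
  rw [Set.mem_symmDiff] at hx
  rcases hx with ⟨hx1, hx2⟩ | ⟨hx2, hx1⟩
  · -- x ∈ I₁ \ I₂ : take y = x, I₁ ∆ {x} = I₁ \ {x}
    refine ⟨x, Set.mem_symmDiff.2 (Or.inl ⟨hx1, hx2⟩), ?_⟩
    have hs : I₁ ∆ ({x, x} : Set α) = I₁ \ {x} := by
      ext a; simp only [Set.mem_symmDiff, Set.mem_insert_iff, Set.mem_singleton_iff,
        Set.mem_diff]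
      constructor
      · rintro (⟨ha, hb⟩ | ⟨(rfl | rfl), hb⟩) <;> tauto
      · tauto
    rw [hs]
    exact h₁.subset Set.diff_subset
  · -- x ∈ I₂ \ I₁
    by_cases hi : M.Indep (insert x I₁)
    · refine ⟨x, Set.mem_symmDiff.2 (Or.inr ⟨hx2, hx1⟩), ?_⟩
      have hs : I₁ ∆ ({x, x} : Set α) = insert x I₁ := by
        ext a; simp only [Set.mem_symmDiff, Set.mem_insert_iff, Set.mem_singleton_iff]
        by_cases hax : a = x <;> simp_all
      rw [hs]; exact hi
    · have hxE : x ∈ M.E := h₂.subset_ground hx2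
      have hxcl : x ∈ M.closure I₁ := by
        by_contra hc
        exact hi ((h₁.insert_indep_iff_of_notMem hx1).2 ⟨hxE, hc⟩)
      -- pick minimal J ⊆ I₁ with x ∈ closure J
      have hI₁fin : I₁.Finite := hfin.subset h₁.subset_ground
      set s : Set (Set α) := {J | J ⊆ I₁ ∧ x ∈ M.closure J} with hs_def
      have hsfin : s.Finite := hI₁fin.finite_subsets.subset (fun J hJ => hJ.1)
      obtain ⟨J, hJs, hJmin⟩ := Set.exists_min_image s Set.ncard hsfin ⟨I₁, Set.Subset.rfl, hxcl⟩
      obtain ⟨hJI, hJcl⟩ := hJs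
      have hJfin : J.Finite := hI₁fin.subset hJI
      have hJindep : M.Indep J := h₁.subset hJI
      have hmin : ∀ y ∈ J, x ∉ M.closure (J \ {y}) := by
        intro y hy hc
        have h1 : (J \ {y}).ncard < J.ncard := by
          exact Set.ncard_lt_ncard (Set.sdiff_singleton_ssubset.2 hy) hJfin
        have := hJmin (J \ {y}) ⟨(Set.diff_subset).trans hJI, hc⟩
        omega
      -- J ⊄ I₂ : otherwise insert x J ⊆ I₂ is indep, contradicting x ∈ closure J
      have hJnI₂ : ∃ y ∈ J, y ∉ I₂ := by
        by_contra hc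
        push_neg at hc
        have hxJ : x ∉ J := fun h => hx1 (hJI h)
        have : M.Indep (insert x J) := h₂.subset (Set.insert_subset hx2 hc)
        rw [hJindep.insert_indep_iff_of_notMem hxJ] at this
        exact this.2 hJcl
      obtain ⟨y, hyJ, hyI₂⟩ := hJnI₂
      have hyI₁ : y ∈ I₁ := hJI hyJ
      refine ⟨y, Set.mem_symmDiff.2 (Or.inl ⟨hyI₁, hyI₂⟩), ?_⟩
      have hxy : x ≠ y := fun h => hx1 (h ▸ hyI₁)
      have hs2 : I₁ ∆ ({x, y} : Set α) = insert x (I₁ \ {y}) := by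
        ext a; simp only [Set.mem_symmDiff, Set.mem_insert_iff, Set.mem_singleton_iff,
          Set.mem_diff]
        by_cases hax : a = x <;> by_cases hay : a = y <;> simp_all
      rw [hs2]
      -- show insert x (I₁ \ {y}) indep
      have hI₁y : M.Indep (I₁ \ {y}) := h₁.subset Set.diff_subset
      have hxI₁y : x ∉ I₁ \ {y} := fun h => hx1 h.1
      show M.Indep (insert x (I₁ \ {y}))
      rw [hI₁y.insert_indep_iff_of_notMem hxI₁y]
      refine ⟨hxE, fun hc => ?_⟩
      -- exchange: x ∈ closure (insert y (J\{y})) \ closure (J\{y}), so y ∈ closure (insert x (J\{y}))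
      have hins : insert y (J \ {y}) = J := Set.insert_diff_singleton.trans (by
        rw [Set.insert_eq_self]; exact hyJ)
      have hex : y ∈ M.closure (insert x (J \ {y})) :=
        Matroid.mem_closure_insert (hmin y hyJ) (by rw [hins]; exact hJcl)
      have hsub : M.closure (insert x (J \ {y})) ⊆ M.closure (insert x (I₁ \ {y})) :=
        M.closure_subset_closure (Set.insert_subset_insert (Set.diff_subset_diff_left hJI))
      have heq : M.closure (insert x (I₁ \ {y})) = M.closure (I₁ \ {y}) :=
        Matroid.closure_insert_eq_of_mem_closure hc
      have : y ∈ M.closure (I₁ \ {y}) := heq ▸ hsub hex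
      exact h₁.notMem_closure_sdiff_of_mem hyI₁ this
end

section
/- The collection of spanning sets of a matroid satisfies the symmetric exchange axiom: if S₁ and S₂ are spanning sets and x ∈ S₁ △ S₂, then there exists y ∈ S₁ △ S₂ such that S₁ △ {x,y} is spanning. -/
open Set
open scoped symmDiff

lemma spanning_exch_aux  {α : Type*} (M : Matroid α) (S₁ S₂ : Set α) (h1 : M.Spanning S₁) (h2 : M.Spanning S₂)
    (x : α) (hx : x ∈ S₁ ∆ S₂) :
    ∃ y ∈ S₁ ∆ S₂, M.Spanning (S₁ ∆ ({x, y} : Set α)) := by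
  rw [Set.mem_symmDiff] at hx
  rcases hx with ⟨hx1, hx2⟩ | ⟨hx2, hx1⟩
  · -- x ∈ S₁, x ∉ S₂
    by_cases hsp : M.Spanning (S₁ \ {x})
    · refine ⟨x, Set.mem_symmDiff.2 (Or.inl ⟨hx1, hx2⟩), ?_⟩
      have : S₁ ∆ ({x, x} : Set α) = S₁ \ {x} := by
        ext a; by_cases hax : a = x <;> simp [Set.mem_symmDiff, hax, hx1]
      rwa [this]
    · obtain ⟨B₁, hB₁, hB₁S⟩ := h1.exists_isBase_subset
      have hxB₁ : x ∈ B₁ := by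
        by_contra hxB
        exact hsp (hB₁.spanning.superset (fun a ha => ⟨hB₁S ha, fun he => hxB (he ▸ ha)⟩)
          (diff_subset.trans h1.subset_ground))
      obtain ⟨B₂, hB₂, hB₂S⟩ := h2.exists_isBase_subset
      obtain ⟨y, hyB, hbase⟩ := hB₁.exchange hB₂ ⟨hxB₁, fun h => hx2 (hB₂S h)⟩
      have hxy : x ≠ y := fun h => hyB.2 (h ▸ hxB₁)
      have hyS₁ : y ∉ S₁ := by
        intro hy
        refine hsp (hbase.spanning.superset ?_ (diff_subset.trans h1.subset_ground))
        exact insert_subset ⟨hy, fun he => hxy (he.symm)⟩ (diff_subset_diff_left hB₁S)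
      refine ⟨y, Set.mem_symmDiff.2 (Or.inr ⟨hB₂S hyB.1, hyS₁⟩), ?_⟩
      have : S₁ ∆ ({x, y} : Set α) = insert y (S₁ \ {x}) := by
        ext a
        by_cases hax : a = x <;> by_cases hay : a = y <;>
          simp [Set.mem_symmDiff, hax, hay, hx1, hyS₁, hxy, Ne.symm hxy]
      rw [this]
      exact hbase.spanning.superset (insert_subset_insert (diff_subset_diff_left hB₁S))
        (insert_subset (hB₂.subset_ground hyB.1) (diff_subset.trans h1.subset_ground))
  · -- x ∈ S₂, x ∉ S₁
    refine ⟨x, Set.mem_symmDiff.2 (Or.inr ⟨hx2, hx1⟩), ?_⟩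
    have : S₁ ∆ ({x, x} : Set α) = insert x S₁ := by
      ext a; by_cases hax : a = x <;> simp [Set.mem_symmDiff, hax, hx1]
    rw [this]
    exact h1.superset (subset_insert _ _) (insert_subset (h2.subset_ground hx2) h1.subset_ground)

/-- the spanning sets of a matroid satisfy the symmetric exchange axiom. -/
theorem spanning_symExch {α : Type*} (M : Matroid α) (hfin : M.E.Finite) :
    SymExch {S : Set α | M.Spanning S} := fun S₁ h1 S₂ h2 x hx =>
  spanning_exch_aux M S₁ S₂ h1 h2 x hx
end

section
/- If D is a Δ-matroid and F is a feasible set of D, then F is contained in some feasible set of maximum cardinality (i.e., F is independent in the upper matroid). -/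
open Set
open scoped symmDiff

/-- every feasible set is contained in a maximum-cardinality feasible set. -/
theorem feasible_indep_upper {α : Type*} (D : DeltaMatroid α) (F : Set α)
    (hF : F ∈ D.Feasible) : ∃ U, D.UpperBase U ∧ F ⊆ U := by
  have hfin : ∀ G ∈ D.Feasible, G.Finite := fun G hG =>
    D.ground_finite.subset (D.subset_ground G hG)
  -- existence of an upper base
  have hub : ∃ U, D.UpperBase U := by
    set T := Set.ncard '' D.Feasible with hT
    have hTne : T.Nonempty := (D.feasible_nonempty).image _
    have hTbdd : BddAbove T := by
      refine ⟨D.E.ncard, ?_⟩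
      rintro n ⟨G, hG, rfl⟩
      exact Set.ncard_le_ncard (D.subset_ground G hG) D.ground_finite
    obtain ⟨U, hU, hUc⟩ := Nat.sSup_mem hTne hTbdd
    exact ⟨U, hU, fun G hG => hUc ▸ le_csSup hTbdd ⟨G, hG, rfl⟩⟩
  -- choose an upper base minimizing (F \ U).ncard
  set S := {n | ∃ U, D.UpperBase U ∧ (F \ U).ncard = n} with hS
  have hSne : S.Nonempty := by
    obtain ⟨U, hU⟩ := hub
    exact ⟨(F \ U).ncard, U, hU, rfl⟩
  obtain ⟨U, hU, hUc⟩ := Nat.sInf_mem hSne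
  refine ⟨U, hU, ?_⟩
  by_contra hsub
  obtain ⟨x, hxF, hxU⟩ := not_subset.mp hsub
  have hx : x ∈ U ∆ F := Or.inr ⟨hxF, hxU⟩
  obtain ⟨y, hy, hfe⟩ := D.exchange hU.1 hF x hx
  have hUfin : U.Finite := hfin U hU.1
  rcases hy with ⟨hyU, hyF⟩ | ⟨hyF, hyU⟩
  · -- y ∈ U \ F : get a better upper base
    have hyx : y ≠ x := fun h => hxU (h ▸ hyU)
    have heq : U ∆ ({x, y} : Set α) = insert x (U \ {y}) := by
      ext z
      simp only [Set.mem_symmDiff, Set.mem_insert_iff, Set.mem_diff,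
        Set.mem_singleton_iff]
      constructor
      · rintro (⟨hz, hz2⟩ | ⟨(rfl | rfl), hz2⟩)
        · exact Or.inr ⟨hz, fun h => hz2 (Or.inr h)⟩
        · exact Or.inl rfl
        · exact absurd hyU hz2
      · rintro (rfl | ⟨hz, hz2⟩)
        · exact Or.inr ⟨Or.inl rfl, hxU⟩
        · exact Or.inl ⟨hz, by rintro (rfl | rfl) <;> [exact hxU hz; exact hz2 rfl]⟩
    have hcard : (U ∆ ({x, y} : Set α)).ncard = U.ncard := by
      rw [heq]; exact Set.ncard_exchange hxU hyU
    have hub' : D.UpperBase (U ∆ ({x, y} : Set α)) :=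
      ⟨hfe, fun G hG => hcard ▸ hU.2 G hG⟩
    have hdiff : F \ (U ∆ ({x, y} : Set α)) = (F \ U) \ {x} := by
      rw [heq]
      ext z
      simp only [Set.mem_diff, Set.mem_insert_iff, Set.mem_singleton_iff]
      constructor
      · rintro ⟨hz, hz2⟩
        exact ⟨⟨hz, fun h => hz2 (Or.inr ⟨h, fun he => hyF (he ▸ hz)⟩)⟩,
          fun h => hz2 (Or.inl h)⟩
      · rintro ⟨⟨hz, hz2⟩, hz3⟩
        exact ⟨hz, by rintro (rfl | ⟨h, -⟩) <;> [exact hz3 rfl; exact hz2 h]⟩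
    have hlt : ((F \ U) \ {x}).ncard < (F \ U).ncard :=
      Set.ncard_diff_singleton_lt_of_mem ⟨hxF, hxU⟩
        ((hfin F hF).subset Set.diff_subset)
    have : sInf S ≤ ((F \ U) \ {x}).ncard :=
      Nat.sInf_le ⟨_, hub', by rw [hdiff]⟩
    omega
  · -- y ∈ F \ U : get a strictly larger feasible set, contradiction
    have heq : U ∆ ({x, y} : Set α) = U ∪ {x, y} := by
      ext z
      simp only [Set.mem_symmDiff, Set.mem_union, Set.mem_insert_iff,
        Set.mem_singleton_iff]
      constructor
      · rintro (⟨hz, -⟩ | ⟨hz, -⟩) <;> [exact Or.inl hz; exact Or.inr hz]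
      · rintro (hz | hz)
        · exact Or.inl ⟨hz, by rintro (rfl | rfl) <;> [exact hxU hz; exact hyU hz]⟩
        · refine Or.inr ⟨hz, ?_⟩
          rcases hz with rfl | rfl <;> assumption
    have hss : U ⊂ U ∪ {x, y} :=
      ⟨Set.subset_union_left, fun h => hxU (h (Or.inr (Or.inl rfl)))⟩
    have hlt : U.ncard < (U ∪ ({x, y} : Set α)).ncard :=
      Set.ncard_lt_ncard hss (hUfin.union ((Set.finite_singleton y).insert x))
    have := hU.2 _ hfe
    rw [heq] at this
    omega
end

section
/- The feasible sets of maximum cardinality of a Δ-matroid form the bases of a matroid (the upper matroid). -/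
open Set
open scoped symmDiff

section Aux

variable {α : Type*} (D : DeltaMatroid α)

/-- The "cofeasible" sets: complements in `E` of feasible sets (the twist by `E`). -/
def coFeas : Set (Set α) := {S | S ⊆ D.E ∧ D.E \ S ∈ D.Feasible}

variable {D}

lemma coFeas_nonempty : (coFeas D).Nonempty := by
  obtain ⟨F, hF⟩ := D.feasible_nonempty
  refine ⟨D.E \ F, diff_subset, ?_⟩
  rwa [diff_diff_cancel_left (D.subset_ground F hF)]

/-- The twist family satisfies the symmetric exchange axiom. -/
lemma coFeas_exch : SymExch (coFeas D) := by
  intro S₁ hS₁ S₂ hS₂ x hx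
  obtain ⟨hS₁E, hF₁⟩ := hS₁
  obtain ⟨hS₂E, hF₂⟩ := hS₂
  have hsd : (D.E \ S₁) ∆ (D.E \ S₂) = S₁ ∆ S₂ := by
    ext z
    have h1 : z ∈ S₁ → z ∈ D.E := fun h => hS₁E h
    have h2 : z ∈ S₂ → z ∈ D.E := fun h => hS₂E h
    simp only [mem_symmDiff, mem_diff]
    tauto
  have hx' : x ∈ (D.E \ S₁) ∆ (D.E \ S₂) := by rw [hsd]; exact hx
  obtain ⟨y, hy, hxy⟩ := D.exchange hF₁ hF₂ x hx'
  rw [hsd] at hy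
  have hxE : x ∈ D.E := by
    rcases hx with ⟨h, _⟩ | ⟨h, _⟩
    · exact hS₁E h
    · exact hS₂E h
  have hyE : y ∈ D.E := by
    rcases hy with ⟨h, _⟩ | ⟨h, _⟩
    · exact hS₁E h
    · exact hS₂E h
  have hsub1 : S₁ ∆ ({x, y} : Set α) ⊆ D.E := by
    intro z hz
    rcases hz with ⟨h, _⟩ | ⟨h, _⟩
    · exact hS₁E h
    · rcases h with rfl | rfl
      · exact hxE
      · exact hyE
  have hdiff : ∀ X : Set α, X ⊆ D.E → D.E \ X = D.E ∆ X := by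
    intro X hX
    rw [Set.symmDiff_def, diff_eq_empty.mpr hX, union_empty]
  refine ⟨y, hy, hsub1, ?_⟩
  have key : D.E \ (S₁ ∆ ({x, y} : Set α)) = (D.E \ S₁) ∆ ({x, y} : Set α) := by
    rw [hdiff _ hsub1, hdiff _ hS₁E, symmDiff_assoc]
  rw [key]
  exact hxy

variable (D)

/-- Lower bases of the twist family. -/
def coLB (B : Set α) : Prop := B ∈ coFeas D ∧ ∀ T ∈ coFeas D, B.ncard ≤ T.ncard

variable {D}

lemma exists_coLB : ∃ B, coLB D B := by
  have hne : {n | ∃ S ∈ coFeas D, S.ncard = n}.Nonempty := by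
    obtain ⟨S, hS⟩ := coFeas_nonempty (D := D)
    exact ⟨S.ncard, S, hS, rfl⟩
  obtain ⟨S, hS, hSn⟩ := Nat.sInf_mem hne
  refine ⟨S, hS, fun T hT => ?_⟩
  rw [hSn]
  exact Nat.sInf_le ⟨T, hT, rfl⟩

lemma coLB_finite {B : Set α} (hB : coLB D B) : B.Finite :=
  D.ground_finite.subset hB.1.1

lemma coLB_exchange : Matroid.ExchangeProperty (coLB D) := by
  intro X Y hX hY a ha
  have hXfin : X.Finite := coLB_finite hX
  have haXY : a ∈ X ∆ Y := Or.inl ⟨ha.1, ha.2⟩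
  obtain ⟨b, hb, hfeas⟩ := coFeas_exch hX.1 hY.1 a haXY
  by_cases hbX : b ∈ X
  · -- bad case: the exchanged set is strictly smaller, contradicting minimality
    exfalso
    have hsub : X ∆ ({a, b} : Set α) ⊆ X := by
      intro z hz
      rcases hz with ⟨h, _⟩ | ⟨h, hzX⟩
      · exact h
      · rcases h with rfl | rfl
        · exact absurd ha.1 hzX
        · exact absurd hbX hzX
    have hssub : X ∆ ({a, b} : Set α) ⊂ X := by
      refine ⟨hsub, fun hsub' => ?_⟩
      have : a ∈ X ∆ ({a, b} : Set α) := hsub' ha.1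
      rcases this with ⟨_, h⟩ | ⟨_, h⟩
      · exact h (Or.inl rfl)
      · exact h ha.1
    have hlt : (X ∆ ({a, b} : Set α)).ncard < X.ncard :=
      Set.ncard_lt_ncard hssub hXfin
    exact absurd (hX.2 _ hfeas) (by omega)
  · -- good case: b ∈ Y \ X
    have hbY : b ∈ Y := by
      rcases hb with ⟨h, _⟩ | ⟨h, _⟩
      · exact absurd h hbX
      · exact h
    have heq : X ∆ ({a, b} : Set α) = insert b (X \ {a}) := by
      ext z
      have h1 : z = a → z ∈ X := fun h => h ▸ ha.1
      have h2 : z = b → z ∉ X := fun h => h ▸ hbX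
      simp only [mem_symmDiff, mem_insert_iff, mem_diff, mem_singleton_iff]
      tauto
    rw [heq] at hfeas
    have hncard : (insert b (X \ {a})).ncard = X.ncard :=
      Set.ncard_exchange hbX ha.1
    refine ⟨b, ⟨hbY, hbX⟩, ⟨hfeas, fun T hT => ?_⟩⟩
    rw [hncard]
    exact hX.2 T hT

lemma coLB_subset_ground {B : Set α} (hB : coLB D B) : B ⊆ D.E := hB.1.1

/-- Cardinality translation: for `F ⊆ E`, complementation reverses the order of `ncard`. -/
lemma coLB_iff_upperBase {B : Set α} (hBE : B ⊆ D.E) :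
    coLB D (D.E \ B) ↔ D.UpperBase B := by
  have hEfin := D.ground_finite
  have hBB : D.E \ (D.E \ B) = B := diff_diff_cancel_left hBE
  constructor
  · rintro ⟨⟨-, hfeas⟩, hmin⟩
    rw [hBB] at hfeas
    refine ⟨hfeas, fun F hF => ?_⟩
    have hFE := D.subset_ground F hF
    have hcoF : D.E \ F ∈ coFeas D :=
      ⟨diff_subset, by rwa [diff_diff_cancel_left hFE]⟩
    have h1 := hmin _ hcoF
    have h2 : (D.E \ B).ncard = D.E.ncard - B.ncard :=
      Set.ncard_diff hBE (hEfin.subset hBE)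
    have h3 : (D.E \ F).ncard = D.E.ncard - F.ncard :=
      Set.ncard_diff hFE (hEfin.subset hFE)
    have h4 : B.ncard ≤ D.E.ncard := Set.ncard_le_ncard hBE hEfin
    have h5 : F.ncard ≤ D.E.ncard := Set.ncard_le_ncard hFE hEfin
    omega
  · rintro ⟨hfeas, hmax⟩
    refine ⟨⟨diff_subset, by rwa [hBB]⟩, ?_⟩
    rintro T ⟨hTE, hTfeas⟩
    have h1 := hmax _ hTfeas
    have h2 : (D.E \ B).ncard = D.E.ncard - B.ncard :=
      Set.ncard_diff hBE (hEfin.subset hBE)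
    have h3 : (D.E \ T).ncard = D.E.ncard - T.ncard :=
      Set.ncard_diff hTE (hEfin.subset hTE)
    have h4 : B.ncard ≤ D.E.ncard := Set.ncard_le_ncard hBE hEfin
    have h5 : T.ncard ≤ D.E.ncard := Set.ncard_le_ncard hTE hEfin
    omega

end Aux

/-- the maximum-cardinality feasible sets are the bases of a matroid. -/
theorem upper_matroid_exists {α : Type*} (D : DeltaMatroid α) :
    ∃ M : Matroid α, IsUpperMatroid D M := by
  set M₀ : Matroid α := Matroid.ofIsBaseOfFinite D.ground_finite (coLB D)
    exists_coLB coLB_exchange (fun B hB => coLB_subset_ground hB) with hM₀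
  refine ⟨M₀✶, ?_, fun B => ?_⟩
  · simp [hM₀]
  · have hE : M₀.E = D.E := by simp [hM₀]
    rw [Matroid.dual_isBase_iff', hE]
    have hbase : ∀ S, M₀.IsBase S ↔ coLB D S := by
      intro S
      simp [hM₀]
    constructor
    · rintro ⟨hB, hBE⟩
      rw [hbase] at hB
      exact (coLB_iff_upperBase hBE).mp hB
    · intro hB
      have hBE : B ⊆ D.E := D.subset_ground B hB.1
      exact ⟨(hbase _).mpr ((coLB_iff_upperBase hBE).mpr hB), hBE⟩
end

section
/- If D is a Δ-matroid with upper matroid M_u and lower matroid M_l, then every circuit of M_u is a union of circuits of M_l. -/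
open Set
open scoped symmDiff

lemma exists_minimal_dep' {α : Type*} (M : Matroid α) :
    ∀ n (S : Set α), S.Finite → S.ncard ≤ n → ¬ M.Indep S →
      ∃ C', C' ⊆ S ∧ ¬ M.Indep C' ∧ ∀ D, D ⊂ C' → M.Indep D := by
  intro n
  induction n with
  | zero =>
    intro S hS hn hdep
    by_cases hall : ∀ D, D ⊂ S → M.Indep D
    · exact ⟨S, subset_rfl, hdep, hall⟩
    · push_neg at hall
      obtain ⟨D, hDS, _⟩ := hall
      have hSemp : S = ∅ := (Set.ncard_eq_zero hS).1 (Nat.le_zero.1 hn)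
      rw [hSemp] at hDS
      have : D = ∅ := Set.subset_empty_iff.1 hDS.subset
      exact absurd this hDS.ne
  | succ n IH =>
    intro S hS hn hdep
    by_cases hall : ∀ D, D ⊂ S → M.Indep D
    · exact ⟨S, subset_rfl, hdep, hall⟩
    · push_neg at hall
      obtain ⟨D, hDS, hDdep⟩ := hall
      have hDfin : D.Finite := hS.subset hDS.subset
      have hDn : D.ncard ≤ n := by
        have := Set.ncard_lt_ncard hDS hS
        omega
      obtain ⟨C', h1, h2, h3⟩ := IH D hDfin hDn hDdep
      exact ⟨C', h1.trans hDS.subset, h2, h3⟩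

namespace DeltaMatroid


variable {α : Type*} (D : DeltaMatroid α)

lemma feasible_finite {F : Set α} (hF : F ∈ D.Feasible) : F.Finite :=
  D.ground_finite.subset (D.subset_ground F hF)

lemma feasible_setFinite : D.Feasible.Finite :=
  D.ground_finite.finite_subsets.subset (fun F hF => D.subset_ground F hF)

lemma exists_lowerBase : ∃ B, D.LowerBase B := by
  obtain ⟨B, hB, hmin⟩ := Set.exists_min_image D.Feasible Set.ncard D.feasible_setFinite
    D.feasible_nonempty
  exact ⟨B, hB, hmin⟩

lemma exists_upperBase : ∃ B, D.UpperBase B := by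
  obtain ⟨B, hB, hmax⟩ := Set.exists_max_image D.Feasible Set.ncard D.feasible_setFinite
    D.feasible_nonempty
  exact ⟨B, hB, hmax⟩

lemma lowerBase_setFinite : {B | D.LowerBase B}.Finite :=
  D.feasible_setFinite.subset (fun _ hB => hB.1)

/-- Every feasible set contains a lower base. -/
lemma exists_lowerBase_subset {F : Set α} (hF : F ∈ D.Feasible) :
    ∃ B, D.LowerBase B ∧ B ⊆ F := by
  obtain ⟨B0, hB0⟩ := D.exists_lowerBase
  obtain ⟨B, hB, hBmin⟩ := Set.exists_min_image {B | D.LowerBase B}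
    (fun B => (B \ F).ncard) D.lowerBase_setFinite ⟨B0, hB0⟩
  refine ⟨B, hB, ?_⟩
  by_contra hnot
  obtain ⟨x, hxB, hxF⟩ := Set.not_subset.1 hnot
  have hBfin : B.Finite := D.feasible_finite hB.1
  have hxd : x ∈ B ∆ F := Set.mem_symmDiff.2 (Or.inl ⟨hxB, hxF⟩)
  obtain ⟨y, hy, hT⟩ := D.exchange hB.1 hF x hxd
  rcases Set.mem_symmDiff.1 hy with ⟨hyB, hyF⟩ | ⟨hyF, hyB⟩
  · -- T ⊆ B \ {x} : too small, contradicts minimum cardinality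
    have hTsub : B ∆ ({x, y} : Set α) ⊆ B \ {x} := by
      intro w hw
      rcases Set.mem_symmDiff.1 hw with ⟨h1, h2⟩ | ⟨h1, h2⟩
      · exact ⟨h1, fun hwx => h2 (by simp [Set.mem_singleton_iff.1 hwx])⟩
      · rcases h1 with h1 | h1
        · exact absurd (h1 ▸ hxB) h2
        · exact absurd ((Set.mem_singleton_iff.1 h1) ▸ hyB) h2
    have h1 : (B ∆ ({x, y} : Set α)).ncard ≤ (B \ {x}).ncard :=
      Set.ncard_le_ncard hTsub (hBfin.diff)
    have h2 : (B \ {x}).ncard < B.ncard := Set.ncard_diff_singleton_lt_of_mem hxB hBfin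
    have h3 : B.ncard ≤ (B ∆ ({x, y} : Set α)).ncard := hB.2 _ hT
    omega
  · -- swap x for y : lower base closer to F
    have hxy : x ≠ y := fun h => hxF (h ▸ hyF)
    have hTeq : B ∆ ({x, y} : Set α) = insert y (B \ {x}) := by
      ext w
      by_cases h1 : w = x <;> by_cases h2 : w = y <;>
        simp_all [Set.mem_symmDiff]
    have hcard : (B ∆ ({x, y} : Set α)).ncard = B.ncard := by
      rw [hTeq]; exact Set.ncard_exchange hyB hxB
    have hLB' : D.LowerBase (B ∆ ({x, y} : Set α)) :=
      ⟨hT, fun F' hF' => hcard ▸ hB.2 F' hF'⟩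
    have hsub : (B ∆ ({x, y} : Set α)) \ F ⊆ (B \ F) \ {x} := by
      rw [hTeq]
      intro w hw
      obtain ⟨hw1, hw2⟩ := hw
      rcases hw1 with hw1 | hw1
      · exact absurd (hw1 ▸ hyF) hw2
      · exact ⟨⟨hw1.1, hw2⟩, hw1.2⟩
    have hlt : ((B ∆ ({x, y} : Set α)) \ F).ncard < (B \ F).ncard :=
      lt_of_le_of_lt (Set.ncard_le_ncard hsub ((hBfin.diff).diff))
        (Set.ncard_diff_singleton_lt_of_mem ⟨hxB, hxF⟩ (hBfin.diff))
    exact absurd (hBmin _ hLB') (not_le.2 hlt)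

/-- Every feasible set is contained in an upper base. -/
lemma exists_upperBase_superset {F : Set α} (hF : F ∈ D.Feasible) :
    ∃ B, D.UpperBase B ∧ F ⊆ B := by
  obtain ⟨B0, hB0⟩ := D.exists_upperBase
  obtain ⟨B, hB, hBmin⟩ := Set.exists_min_image {B | D.UpperBase B}
    (fun B => (F \ B).ncard) (D.feasible_setFinite.subset (fun _ hB => hB.1)) ⟨B0, hB0⟩
  refine ⟨B, hB, ?_⟩
  by_contra hnot
  obtain ⟨x, hxF, hxB⟩ := Set.not_subset.1 hnot
  have hBfin : B.Finite := D.feasible_finite hB.1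
  have hFfin : F.Finite := D.feasible_finite hF
  have hxd : x ∈ B ∆ F := Set.mem_symmDiff.2 (Or.inr ⟨hxF, hxB⟩)
  obtain ⟨y, hy, hT⟩ := D.exchange hB.1 hF x hxd
  rcases Set.mem_symmDiff.1 hy with ⟨hyB, hyF⟩ | ⟨hyF, hyB⟩
  · -- swap y out, x in : upper base closer to F
    have hxy : x ≠ y := fun h => hxB (h ▸ hyB)
    have hTeq : B ∆ ({x, y} : Set α) = insert x (B \ {y}) := by
      ext w
      by_cases h1 : w = x <;> by_cases h2 : w = y <;>
        simp_all [Set.mem_symmDiff]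
    have hcard : (B ∆ ({x, y} : Set α)).ncard = B.ncard := by
      rw [hTeq]; exact Set.ncard_exchange hxB hyB
    have hUB' : D.UpperBase (B ∆ ({x, y} : Set α)) :=
      ⟨hT, fun F' hF' => hcard ▸ hB.2 F' hF'⟩
    have hsub : F \ (B ∆ ({x, y} : Set α)) ⊆ (F \ B) \ {x} := by
      rw [hTeq]
      intro w hw
      obtain ⟨hw1, hw2⟩ := hw
      simp only [Set.mem_insert_iff, Set.mem_diff, Set.mem_singleton_iff, not_or] at hw2
      obtain ⟨hw2, hw3⟩ := hw2
      constructor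
      · refine ⟨hw1, fun hwB => ?_⟩
        by_cases hwy : w = y
        · exact hyF (hwy ▸ hw1)
        · exact hw3 ⟨hwB, hwy⟩
      · exact hw2
    have hlt : (F \ (B ∆ ({x, y} : Set α))).ncard < (F \ B).ncard :=
      lt_of_le_of_lt (Set.ncard_le_ncard hsub ((hFfin.diff).diff))
        (Set.ncard_diff_singleton_lt_of_mem ⟨hxF, hxB⟩ (hFfin.diff))
    exact absurd (hBmin _ hUB') (not_le.2 hlt)
  · -- T ⊇ B ∪ {x} : too big
    have hTsub : insert x B ⊆ B ∆ ({x, y} : Set α) := by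
      intro w hw
      rcases hw with hw | hw
      · subst hw
        refine Set.mem_symmDiff.2 (Or.inr ⟨Or.inl rfl, hxB⟩)
      · refine Set.mem_symmDiff.2 (Or.inl ⟨hw, fun hwxy => ?_⟩)
        rcases hwxy with h | h
        · exact hxB (h ▸ hw)
        · exact hyB ((Set.mem_singleton_iff.1 h) ▸ hw)
    have h1 : (insert x B).ncard ≤ (B ∆ ({x, y} : Set α)).ncard :=
      Set.ncard_le_ncard hTsub (D.feasible_finite hT)
    have h2 : B.ncard < (insert x B).ncard := by
      rw [Set.ncard_insert_of_notMem hxB hBfin]; omega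
    have h3 : (B ∆ ({x, y} : Set α)).ncard ≤ B.ncard := hB.2 _ hT
    omega

lemma engine (A : Set α) (e : α) (he : e ∉ A) (F₁ : Set α)
    (hF₁ : F₁ ∈ D.Feasible) (heF : e ∈ F₁)
    (hmin : ∀ F ∈ D.Feasible, (F₁ \ A).ncard ≤ (F \ A).ncard) :
    ∀ G ∈ D.Feasible, ∃ W ∈ D.Feasible,
      e ∈ W ∧ G ∩ A ⊆ W ∧ (W \ A).ncard ≤ (G \ A).ncard := by
  have hF₁fin : F₁.Finite := D.feasible_finite hF₁
  have heF₁A : e ∈ F₁ \ A := ⟨heF, he⟩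
  suffices h : ∀ n : ℕ, ∀ G ∈ D.Feasible, (G \ A).ncard ≤ n →
      ∃ W ∈ D.Feasible, e ∈ W ∧ G ∩ A ⊆ W ∧ (W \ A).ncard ≤ (G \ A).ncard by
    intro G hG; exact h _ G hG le_rfl
  intro n
  induction n with
  | zero =>
    intro G hG hlev
    by_cases heG : e ∈ G
    · exact ⟨G, hG, heG, Set.inter_subset_left, le_rfl⟩
    · exfalso
      have h1 : (F₁ \ A).ncard ≤ (G \ A).ncard := hmin G hG
      have h2 : 0 < (F₁ \ A).ncard := (Set.ncard_pos (hF₁fin.diff)).2 ⟨e, heF₁A⟩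
      omega
  | succ n IHn =>
    suffices hd : ∀ d : ℕ, ∀ G ∈ D.Feasible, (G \ A).ncard ≤ n + 1 → (G ∆ F₁).ncard ≤ d →
        ∃ W ∈ D.Feasible, e ∈ W ∧ G ∩ A ⊆ W ∧ (W \ A).ncard ≤ (G \ A).ncard by
      intro G hG hlev
      exact hd _ G hG hlev le_rfl
    intro d
    induction d with
    | zero =>
      intro G hG hlev hd
      have hGfin : G.Finite := D.feasible_finite hG
      have hsfin : (G ∆ F₁).Finite :=
        (hGfin.union hF₁fin).subset symmDiff_subset_union
      have hemp : G ∆ F₁ = ∅ := (Set.ncard_eq_zero hsfin).1 (le_antisymm hd (Nat.zero_le _))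
      have hGF : G = F₁ := symmDiff_eq_bot.1 (by simpa using hemp)
      exact ⟨G, hG, hGF ▸ heF, Set.inter_subset_left, le_rfl⟩
    | succ d IHd =>
      intro G hG hlev hd
      have hGfin : G.Finite := D.feasible_finite hG
      by_cases heG : e ∈ G
      · exact ⟨G, hG, heG, Set.inter_subset_left, le_rfl⟩
      have hzex : ((G \ A) \ F₁).Nonempty := by
        rw [Set.nonempty_iff_ne_empty]
        intro hemp
        have hsub : G \ A ⊆ (F₁ \ A) \ {e} := by
          intro w hw
          have hwF : w ∈ F₁ := by
            by_contra hwF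
            exact (Set.eq_empty_iff_forall_notMem.1 hemp w) ⟨hw, hwF⟩
          exact ⟨⟨hwF, hw.2⟩, fun hwe => heG ((Set.mem_singleton_iff.1 hwe) ▸ hw.1)⟩
        have h1 : (G \ A).ncard ≤ ((F₁ \ A) \ {e}).ncard :=
          Set.ncard_le_ncard hsub ((hF₁fin.diff).diff)
        have h2 : ((F₁ \ A) \ {e}).ncard = (F₁ \ A).ncard - 1 :=
          Set.ncard_diff_singleton_of_mem heF₁A
        have h3 : (F₁ \ A).ncard ≤ (G \ A).ncard := hmin G hG
        have h4 : 0 < (F₁ \ A).ncard := (Set.ncard_pos (hF₁fin.diff)).2 ⟨e, heF₁A⟩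
        omega
      obtain ⟨z, ⟨hzG, hzA⟩, hzF⟩ := hzex
      have hze : z ≠ e := fun h => heG (h ▸ hzG)
      have hzd : z ∈ G ∆ F₁ := Set.mem_symmDiff.2 (Or.inl ⟨hzG, hzF⟩)
      obtain ⟨y, hy, hT⟩ := D.exchange hG hF₁ z hzd
      have hGAcard : 0 < (G \ A).ncard := (Set.ncard_pos (hGfin.diff)).2 ⟨z, hzG, hzA⟩
      rcases Set.mem_symmDiff.1 hy with ⟨hyG, hyF⟩ | ⟨hyF, hyG⟩
      · -- CASE I : y ∈ G, y ∉ F₁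
        by_cases hyz : y = z
        · -- T = G \ {z}
          have hTeq : G ∆ ({z, y} : Set α) = G \ {z} := by
            rw [hyz]
            ext w
            by_cases h1 : w = z <;> simp_all [Set.mem_symmDiff]
          rw [hTeq] at hT
          have hlev' : ((G \ {z}) \ A).ncard ≤ n := by
            have : (G \ {z}) \ A = (G \ A) \ {z} := by
              ext w; simp only [Set.mem_diff, Set.mem_singleton_iff]; tauto
            have hm : z ∈ G \ A := ⟨hzG, hzA⟩
            rw [this, Set.ncard_diff_singleton_of_mem hm]
            omega
          obtain ⟨W, hW, heW, hsubW, hlevW⟩ := IHn (G \ {z}) hT hlev'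
          refine ⟨W, hW, heW, ?_, ?_⟩
          · intro w hw
            exact hsubW ⟨⟨hw.1, fun h => hzA ((Set.mem_singleton_iff.1 h) ▸ hw.2)⟩, hw.2⟩
          · refine hlevW.trans (Set.ncard_le_ncard (fun w hw => ⟨hw.1.1, hw.2⟩) (hGfin.diff))
        · by_cases hyA : y ∈ A
          · -- PROBLEM CASE : S₀ = G \ {z, y}
            have hTeq : G ∆ ({z, y} : Set α) = G \ {z, y} := by
              ext w
              by_cases h1 : w = z <;> by_cases h2 : w = y <;>
                simp_all [Set.mem_symmDiff]
            rw [hTeq] at hT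
            set S₀ := G \ {z, y} with hS₀
            have hS₀fin : S₀.Finite := hGfin.diff
            have hS₀lev : (S₀ \ A).ncard ≤ n := by
              have h1 : S₀ \ A ⊆ (G \ A) \ {z} := by
                intro w hw
                refine ⟨⟨hw.1.1, hw.2⟩, fun h => hw.1.2 (Or.inl (Set.mem_singleton_iff.1 h))⟩
              have h2 : ((G \ A) \ {z}).ncard = (G \ A).ncard - 1 :=
                Set.ncard_diff_singleton_of_mem ⟨hzG, hzA⟩
              have h3 := Set.ncard_le_ncard h1 ((hGfin.diff).diff)
              omega
            obtain ⟨W₀, hW₀, heW₀, hsub₀, hlev₀⟩ := IHn S₀ hT hS₀lev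
            have hW₀fin : W₀.Finite := D.feasible_finite hW₀
            have hS₀A : (S₀ \ A).ncard ≤ (G \ A).ncard - 1 := by
              have h1 : S₀ \ A ⊆ (G \ A) \ {z} := fun w hw =>
                ⟨⟨hw.1.1, hw.2⟩, fun h => hw.1.2 (Or.inl (Set.mem_singleton_iff.1 h))⟩
              have h2 : ((G \ A) \ {z}).ncard = (G \ A).ncard - 1 :=
                Set.ncard_diff_singleton_of_mem ⟨hzG, hzA⟩
              have h3 := Set.ncard_le_ncard h1 ((hGfin.diff).diff)
              omega
            have hGsub₀ : ∀ w ∈ G ∩ A, w ≠ y → w ∈ W₀ := by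
              intro w hw hwy
              refine hsub₀ ⟨⟨hw.1, fun h => ?_⟩, hw.2⟩
              rcases h with h | h
              · exact hzA (h ▸ hw.2)
              · exact hwy (Set.mem_singleton_iff.1 h)
            by_cases hyW : y ∈ W₀
            · refine ⟨W₀, hW₀, heW₀, ?_, hlev₀.trans (by omega)⟩
              intro w hw
              by_cases hwy : w = y
              · exact hwy ▸ hyW
              · exact hGsub₀ w hw hwy
            · -- re-insert y via a second exchange
              have hyd : y ∈ W₀ ∆ G := Set.mem_symmDiff.2 (Or.inr ⟨hyG, hyW⟩)
              obtain ⟨y', hy', hT'⟩ := D.exchange hW₀ hG y hyd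
              have hey : e ≠ y := fun h => he (h ▸ hyA)
              rcases Set.mem_symmDiff.1 hy' with ⟨hy'W, hy'G⟩ | ⟨hy'G, hy'W⟩
              · -- y' ∈ W₀ \ G
                by_cases hy'e : y' = e
                · -- S₁ = (W₀ \ {e}) ∪ {y} ; recurse at level ≤ n
                  have hTeq' : W₀ ∆ ({y, y'} : Set α) = insert y (W₀ \ {e}) := by
                    rw [hy'e]
                    ext w
                    by_cases h1 : w = y <;> by_cases h2 : w = e <;>
                      simp_all [Set.mem_symmDiff]
                  rw [hTeq'] at hT'
                  set S₁ := insert y (W₀ \ {e}) with hS₁def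
                  have hS₁lev : (S₁ \ A).ncard ≤ n := by
                    have h1 : S₁ \ A = (W₀ \ A) \ {e} := by
                      ext w
                      simp only [hS₁def, Set.mem_diff, Set.mem_insert_iff,
                        Set.mem_singleton_iff]
                      constructor
                      · rintro ⟨h2 | ⟨h2, h3⟩, h4⟩
                        · exact absurd (h2 ▸ hyA) (h2 ▸ h4)
                        · exact ⟨⟨h2, h4⟩, h3⟩
                      · rintro ⟨⟨h2, h3⟩, h4⟩
                        exact ⟨Or.inr ⟨h2, h4⟩, h3⟩
                    have h2 : e ∈ W₀ \ A := ⟨heW₀, he⟩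
                    rw [h1, Set.ncard_diff_singleton_of_mem h2]
                    omega
                  obtain ⟨W₂, hW₂, heW₂, hsub₂, hlev₂⟩ := IHn S₁ hT' hS₁lev
                  refine ⟨W₂, hW₂, heW₂, ?_, ?_⟩
                  · intro w hw
                    by_cases hwy : w = y
                    · exact hsub₂ ⟨Or.inl hwy, hw.2⟩
                    · refine hsub₂ ⟨Or.inr ⟨hGsub₀ w hw hwy, fun h => ?_⟩, hw.2⟩
                      exact he ((Set.mem_singleton_iff.1 h) ▸ hw.2)
                  · refine hlev₂.trans ?_
                    have h1 : S₁ \ A = (W₀ \ A) \ {e} := by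
                      ext w
                      simp only [hS₁def, Set.mem_diff, Set.mem_insert_iff,
                        Set.mem_singleton_iff]
                      constructor
                      · rintro ⟨h2 | ⟨h2, h3⟩, h4⟩
                        · exact absurd (h2 ▸ hyA) (h2 ▸ h4)
                        · exact ⟨⟨h2, h4⟩, h3⟩
                      · rintro ⟨⟨h2, h3⟩, h4⟩
                        exact ⟨Or.inr ⟨h2, h4⟩, h3⟩
                    rw [h1]
                    refine (Set.ncard_le_ncard (fun w hw => hw.1) (hW₀fin.diff)).trans
                      (hlev₀.trans (by omega))
                · -- W = (W₀ \ {y'}) ∪ {y}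
                  have hTeq' : W₀ ∆ ({y, y'} : Set α) = insert y (W₀ \ {y'}) := by
                    ext w
                    by_cases h1 : w = y <;> by_cases h2 : w = y' <;>
                      simp_all [Set.mem_symmDiff]
                  rw [hTeq'] at hT'
                  refine ⟨_, hT', Or.inr ⟨heW₀, fun h => hy'e (Set.mem_singleton_iff.1 h).symm⟩,
                    ?_, ?_⟩
                  · intro w hw
                    by_cases hwy : w = y
                    · exact Or.inl hwy
                    · exact Or.inr ⟨hGsub₀ w hw hwy, fun h =>
                        hy'G ((Set.mem_singleton_iff.1 h) ▸ hw.1)⟩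
                  · have h1 : insert y (W₀ \ {y'}) \ A ⊆ W₀ \ A := by
                      intro w hw
                      rcases hw.1 with h2 | h2
                      · exact absurd (h2 ▸ hyA) (h2 ▸ hw.2)
                      · exact ⟨h2.1, hw.2⟩
                    exact (Set.ncard_le_ncard h1 (hW₀fin.diff)).trans (hlev₀.trans (by omega))
              · -- y' ∈ G \ W₀
                by_cases hy'y : y' = y
                · -- W = W₀ ∪ {y}
                  have hTeq' : W₀ ∆ ({y, y'} : Set α) = insert y W₀ := by
                    rw [hy'y]
                    ext w
                    by_cases h1 : w = y <;> simp_all [Set.mem_symmDiff]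
                  rw [hTeq'] at hT'
                  refine ⟨_, hT', Or.inr heW₀, ?_, ?_⟩
                  · intro w hw
                    by_cases hwy : w = y
                    · exact Or.inl hwy
                    · exact Or.inr (hGsub₀ w hw hwy)
                  · have h1 : insert y W₀ \ A = W₀ \ A := by
                      ext w
                      simp only [Set.mem_diff, Set.mem_insert_iff]
                      constructor
                      · rintro ⟨h2 | h2, h3⟩
                        · exact absurd (h2 ▸ hyA) (h2 ▸ h3)
                        · exact ⟨h2, h3⟩
                      · rintro ⟨h2, h3⟩; exact ⟨Or.inr h2, h3⟩
                    rw [h1]; exact hlev₀.trans (by omega)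
                · -- W = W₀ ∪ {y, y'}
                  have hTeq' : W₀ ∆ ({y, y'} : Set α) = insert y (insert y' W₀) := by
                    ext w
                    by_cases h1 : w = y <;> by_cases h2 : w = y' <;>
                      simp_all [Set.mem_symmDiff]
                  rw [hTeq'] at hT'
                  refine ⟨_, hT', Or.inr (Or.inr heW₀), ?_, ?_⟩
                  · intro w hw
                    by_cases hwy : w = y
                    · exact Or.inl hwy
                    · exact Or.inr (Or.inr (hGsub₀ w hw hwy))
                  · have h1 : insert y (insert y' W₀) \ A ⊆ insert y' (W₀ \ A) := by
                      intro w hw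
                      rcases hw.1 with h2 | h2 | h2
                      · exact absurd (h2 ▸ hyA) (h2 ▸ hw.2)
                      · exact Or.inl h2
                      · exact Or.inr ⟨h2, hw.2⟩
                    have h2 := Set.ncard_le_ncard h1 ((hW₀fin.diff).insert _)
                    have h3 := Set.ncard_insert_le y' (W₀ \ A)
                    omega
          · -- y ∉ A : T = G \ {z, y}, level drops by 2
            have hTeq : G ∆ ({z, y} : Set α) = G \ {z, y} := by
              ext w
              by_cases h1 : w = z <;> by_cases h2 : w = y <;>
                simp_all [Set.mem_symmDiff]
            rw [hTeq] at hT
            have hlev' : ((G \ {z, y}) \ A).ncard ≤ n := by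
              have h1 : (G \ {z, y}) \ A ⊆ (G \ A) \ {z} := by
                intro w hw
                exact ⟨⟨hw.1.1, hw.2⟩, fun h => hw.1.2 (Or.inl (Set.mem_singleton_iff.1 h))⟩
              have h2 : ((G \ A) \ {z}).ncard = (G \ A).ncard - 1 :=
                Set.ncard_diff_singleton_of_mem ⟨hzG, hzA⟩
              have h3 := Set.ncard_le_ncard h1 ((hGfin.diff).diff)
              omega
            obtain ⟨W, hW, heW, hsubW, hlevW⟩ := IHn (G \ {z, y}) hT hlev'
            refine ⟨W, hW, heW, ?_, ?_⟩
            · intro w hw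
              refine hsubW ⟨⟨hw.1, fun h => ?_⟩, hw.2⟩
              rcases h with h | h
              · exact hzA (h ▸ hw.2)
              · exact hyA ((Set.mem_singleton_iff.1 h) ▸ hw.2)
            · refine hlevW.trans (Set.ncard_le_ncard (fun w hw => ⟨hw.1.1, hw.2⟩)
                (hGfin.diff))
      · -- CASE II : y ∈ F₁, y ∉ G
        have hyz : y ≠ z := fun h => hzF (h ▸ hyF)
        have hTeq : G ∆ ({z, y} : Set α) = insert y (G \ {z}) := by
          ext w
          by_cases h1 : w = z <;> by_cases h2 : w = y <;>
            simp_all [Set.mem_symmDiff]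
        rw [hTeq] at hT
        by_cases hye : y = e
        · -- done directly
          refine ⟨_, hT, Or.inl hye.symm, ?_, ?_⟩
          · intro w hw
            exact Or.inr ⟨hw.1, fun h => hzA ((Set.mem_singleton_iff.1 h) ▸ hw.2)⟩
          · have h1 : insert y (G \ {z}) \ A ⊆ insert y ((G \ A) \ {z}) := by
              intro w hw
              rcases hw.1 with h2 | h2
              · exact Or.inl h2
              · exact Or.inr ⟨⟨h2.1, hw.2⟩, h2.2⟩
            have h2 := Set.ncard_le_ncard h1 (((hGfin.diff).diff).insert _)
            have h3 := Set.ncard_insert_le y ((G \ A) \ {z})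
            have h4 : ((G \ A) \ {z}).ncard = (G \ A).ncard - 1 :=
              Set.ncard_diff_singleton_of_mem ⟨hzG, hzA⟩
            omega
        · by_cases hyA : y ∈ A
          · -- level drops by 1, recurse with IHn
            have hlev' : ((insert y (G \ {z})) \ A).ncard ≤ n := by
              have h1 : (insert y (G \ {z})) \ A ⊆ (G \ A) \ {z} := by
                intro w hw
                rcases hw.1 with h2 | h2
                · exact absurd (h2 ▸ hyA) (h2 ▸ hw.2)
                · exact ⟨⟨h2.1, hw.2⟩, h2.2⟩
              have h2 : ((G \ A) \ {z}).ncard = (G \ A).ncard - 1 :=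
                Set.ncard_diff_singleton_of_mem ⟨hzG, hzA⟩
              have h3 := Set.ncard_le_ncard h1 ((hGfin.diff).diff)
              omega
            obtain ⟨W, hW, heW, hsubW, hlevW⟩ := IHn _ hT hlev'
            refine ⟨W, hW, heW, ?_, ?_⟩
            · intro w hw
              exact hsubW ⟨Or.inr ⟨hw.1, fun h =>
                hzA ((Set.mem_singleton_iff.1 h) ▸ hw.2)⟩, hw.2⟩
            · refine hlevW.trans ?_
              have h1 : (insert y (G \ {z})) \ A ⊆ (G \ A) \ {z} := by
                intro w hw
                rcases hw.1 with h2 | h2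
                · exact absurd (h2 ▸ hyA) (h2 ▸ hw.2)
                · exact ⟨⟨h2.1, hw.2⟩, h2.2⟩
              refine (Set.ncard_le_ncard h1 ((hGfin.diff).diff)).trans ?_
              exact (Set.ncard_le_ncard (fun w hw => hw.1) (hGfin.diff))
          · -- y ∉ A, y ≠ e : same level, symmdiff with F₁ shrinks; recurse with IHd
            set T := insert y (G \ {z}) with hTdef
            have hTfin : T.Finite := (hGfin.diff).insert _
            have hlevT : (T \ A).ncard ≤ n + 1 := by
              have h1 : T \ A ⊆ insert y ((G \ A) \ {z}) := by
                intro w hw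
                rcases hw.1 with h2 | h2
                · exact Or.inl h2
                · exact Or.inr ⟨⟨h2.1, hw.2⟩, h2.2⟩
              have h2 := Set.ncard_le_ncard h1 (((hGfin.diff).diff).insert _)
              have h3 := Set.ncard_insert_le y ((G \ A) \ {z})
              have h4 : ((G \ A) \ {z}).ncard = (G \ A).ncard - 1 :=
                Set.ncard_diff_singleton_of_mem ⟨hzG, hzA⟩
              omega
            have hdT : (T ∆ F₁).ncard ≤ d := by
              have h1 : T ∆ F₁ ⊆ ((G ∆ F₁) \ {z}) \ {y} := by
                intro w hw
                rcases Set.mem_symmDiff.1 hw with ⟨h2, h3⟩ | ⟨h2, h3⟩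
                · rcases h2 with h2 | h2
                  · exact absurd (h2 ▸ hyF) (h2 ▸ h3)
                  · refine ⟨⟨Set.mem_symmDiff.2 (Or.inl ⟨h2.1, h3⟩), h2.2⟩, fun h => ?_⟩
                    exact h3 ((Set.mem_singleton_iff.1 h) ▸ hyF)
                · have hwy : w ≠ y := fun h => h3 (Or.inl h)
                  have hwz : w ≠ z := fun h => hzF (h ▸ h2)
                  refine ⟨⟨Set.mem_symmDiff.2 (Or.inr ⟨h2, fun hwG => h3 (Or.inr ⟨hwG, hwz⟩)⟩),
                    hwz⟩, hwy⟩
              have hsymmfin : (G ∆ F₁).Finite :=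
                (hGfin.union hF₁fin).subset symmDiff_subset_union
              have h2 := Set.ncard_le_ncard h1 ((hsymmfin.diff).diff)
              have hyd' : y ∈ (G ∆ F₁) \ {z} :=
                ⟨Set.mem_symmDiff.2 (Or.inr ⟨hyF, hyG⟩), fun h => hyz (Set.mem_singleton_iff.1 h)⟩
              have h3 : (((G ∆ F₁) \ {z}) \ {y}).ncard = ((G ∆ F₁) \ {z}).ncard - 1 :=
                Set.ncard_diff_singleton_of_mem hyd'
              have h4 : ((G ∆ F₁) \ {z}).ncard = (G ∆ F₁).ncard - 1 :=
                Set.ncard_diff_singleton_of_mem hzd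
              have h5 : 0 < (G ∆ F₁).ncard := (Set.ncard_pos hsymmfin).2 ⟨z, hzd⟩
              have h6 : 0 < ((G ∆ F₁) \ {z}).ncard :=
                (Set.ncard_pos (hsymmfin.diff)).2 ⟨y, hyd'⟩
              omega
            obtain ⟨W, hW, heW, hsubW, hlevW⟩ := IHd T hT hlevT hdT
            refine ⟨W, hW, heW, ?_, ?_⟩
            · intro w hw
              exact hsubW ⟨Or.inr ⟨hw.1, fun h =>
                hzA ((Set.mem_singleton_iff.1 h) ▸ hw.2)⟩, hw.2⟩
            · refine hlevW.trans ?_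
              have h1 : T \ A ⊆ insert y ((G \ A) \ {z}) := by
                intro w hw
                rcases hw.1 with h2 | h2
                · exact Or.inl h2
                · exact Or.inr ⟨⟨h2.1, hw.2⟩, h2.2⟩
              have h2 := Set.ncard_le_ncard h1 (((hGfin.diff).diff).insert _)
              have h3 := Set.ncard_insert_le y ((G \ A) \ {z})
              have h4 : ((G \ A) \ {z}).ncard = (G \ A).ncard - 1 :=
                Set.ncard_diff_singleton_of_mem ⟨hzG, hzA⟩
              omega

end DeltaMatroid

/-- every circuit of the upper matroid is a union of circuits of the lower matroid. -/
theorem circuitsUnion_of_deltaMatroid {α : Type*} (D : DeltaMatroid α) (Mu Ml : Matroid α)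
    (hu : IsUpperMatroid D Mu) (hl : IsLowerMatroid D Ml) : CircuitsUnion Mu Ml := by
  intro C hC
  obtain ⟨hCE, hCdep, hCmin⟩ := hC
  have hCD : C ⊆ D.E := hu.1 ▸ hCE
  have hCfin : C.Finite := D.ground_finite.subset hCD
  have hnofeas : ∀ F ∈ D.Feasible, ¬ C ⊆ F := by
    intro F hF hCF
    obtain ⟨U, hU, hFU⟩ := D.exists_upperBase_superset hF
    have hUbase : Mu.IsBase U := (hu.2 U).2 hU
    exact hCdep (hUbase.indep.subset (hCF.trans hFU))
  have hkey : ∀ x ∈ C, ∃ C', Ml.IsCircuit' C' ∧ C' ⊆ C ∧ x ∈ C' := by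
    intro x hx
    have hxA : x ∉ C \ {x} := fun h => h.2 rfl
    have hCx : Mu.Indep (C \ {x}) := hCmin _ (Set.sdiff_singleton_ssubset.2 hx)
    obtain ⟨BU, hBU, hsubBU⟩ := hCx.exists_isBase_superset
    have hBUfeas : BU ∈ D.Feasible := ((hu.2 BU).1 hBU).1
    have hstep1 : ∀ F ∈ D.Feasible, x ∈ F →
        ∃ F' ∈ D.Feasible, (F' \ (C \ {x})).ncard < (F \ (C \ {x})).ncard := by
      intro F hF hxF
      by_contra hcon
      push_neg at hcon
      obtain ⟨W, hW, hxW, hsubW, -⟩ := D.engine (C \ {x}) x hxA F hF hxF hcon BU hBUfeas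
      refine hnofeas W hW (fun w hw => ?_)
      by_cases hwx : w = x
      · exact hwx ▸ hxW
      · exact hsubW ⟨hsubBU ⟨hw, hwx⟩, hw, hwx⟩
    obtain ⟨B0, hB0⟩ := D.exists_lowerBase
    obtain ⟨Bh, hBh, hBmax⟩ := Set.exists_max_image {B | D.LowerBase B}
      (fun B => (B ∩ (C \ {x})).ncard) D.lowerBase_setFinite ⟨B0, hB0⟩
    have hJx : ¬ Ml.Indep ((Bh ∩ (C \ {x})) ∪ {x}) := by
      intro hind
      obtain ⟨B', hB'base, hsubB'⟩ := hind.exists_isBase_superset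
      have hB' : D.LowerBase B' := (hl.2 B').1 hB'base
      have hxB' : x ∈ B' := hsubB' (Set.mem_union_right _ rfl)
      obtain ⟨F', hF', hlt⟩ := hstep1 B' hB'.1 hxB'
      obtain ⟨B'', hB'', hsubB''⟩ := D.exists_lowerBase_subset hF'
      have hB'fin : B'.Finite := D.feasible_finite hB'.1
      have hB''fin : B''.Finite := D.feasible_finite hB''.1
      have hF'fin : F'.Finite := D.feasible_finite hF'
      have e1 : (B'' \ (C \ {x})).ncard ≤ (F' \ (C \ {x})).ncard :=
        Set.ncard_le_ncard (fun w hw => ⟨hsubB'' hw.1, hw.2⟩) (hF'fin.diff)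
      have e2 : B''.ncard = B'.ncard := le_antisymm (hB''.2 _ hB'.1) (hB'.2 _ hB''.1)
      have s1 : (B' ∩ (C \ {x})).ncard + (B' \ (C \ {x})).ncard = B'.ncard := by
        rw [← Set.ncard_union_eq (Set.disjoint_left.2 (fun w hw1 hw2 => hw2.2 hw1.2))
          (hB'fin.inter_of_left _) (hB'fin.diff), Set.inter_union_diff]
      have s2 : (B'' ∩ (C \ {x})).ncard + (B'' \ (C \ {x})).ncard = B''.ncard := by
        rw [← Set.ncard_union_eq (Set.disjoint_left.2 (fun w hw1 hw2 => hw2.2 hw1.2))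
          (hB''fin.inter_of_left _) (hB''fin.diff), Set.inter_union_diff]
      have e3 : (Bh ∩ (C \ {x})).ncard ≤ (B' ∩ (C \ {x})).ncard :=
        Set.ncard_le_ncard (fun w hw => ⟨hsubB' (Set.mem_union_left _ hw), hw.2⟩)
          (hB'fin.inter_of_left _)
      have e4 := hBmax B'' hB''
      omega
    have hJxfin : ((Bh ∩ (C \ {x})) ∪ {x}).Finite :=
      (((hCfin.diff).inter_of_right _).union (Set.finite_singleton x))
    obtain ⟨C', hC'sub, hC'dep, hC'min⟩ := exists_minimal_dep' Ml _ _ hJxfin le_rfl hJx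
    have hxC' : x ∈ C' := by
      by_contra hxC'
      have hC'Bh : C' ⊆ Bh := by
        intro w hw
        rcases hC'sub hw with h | h
        · exact h.1
        · exact absurd ((Set.mem_singleton_iff.1 h) ▸ hw) hxC'
      exact hC'dep ((((hl.2 Bh).2 hBh).indep).subset hC'Bh)
    have hC'C : C' ⊆ C := by
      intro w hw
      rcases hC'sub hw with h | h
      · exact h.2.1
      · exact (Set.mem_singleton_iff.1 h) ▸ hx
    refine ⟨C', ⟨?_, hC'dep, hC'min⟩, hC'C, hxC'⟩
    rw [hl.1]
    exact hC'C.trans hCD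
  refine ⟨{S | Ml.IsCircuit' S ∧ S ⊆ C}, fun C' hC' => hC'.1, ?_⟩
  apply Set.Subset.antisymm
  · intro x hx
    obtain ⟨C', hcirc, hsub, hxC'⟩ := hkey x hx
    exact ⟨C', ⟨hcirc, hsub⟩, hxC'⟩
  · intro x hx
    obtain ⟨S, ⟨-, hsub⟩, hxS⟩ := hx
    exact hsub hxS
end

section
/- Let D be a Δ-matroid on E whose upper matroid M_u is the uniform matroid of rank rk(M_u) on E. Let 𝓕_max consist of all bases of the lower matroid M_l together with all sets A ⊆ E with rk(M_l) < |A| ≤ rk(M_u) that are spanning in M_l. Then 𝓕_max is the collection of feasible sets of a Δ-matroid with lower matroid M_l, and it is the Δ-matroid with the maximum number of feasible sets among those with lower matroid M_l and upper matroid contained in M_u. -/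
open Set
open scoped symmDiff

section Aux
variable {α : Type*}

lemma sd_pair_mem_mem {F : Set α} {x y : α} (hx : x ∈ F) (hy : y ∈ F) :
    F ∆ ({x, y} : Set α) = F \ {x, y} := by
  ext a
  rcases eq_or_ne a x with rfl | hax <;> rcases eq_or_ne a y with rfl | hay <;>
    simp_all [Set.mem_symmDiff]

lemma sd_pair_mem_not {F : Set α} {x y : α} (hx : x ∈ F) (hy : y ∉ F) :
    F ∆ ({x, y} : Set α) = insert y (F \ {x}) := by
  ext a
  rcases eq_or_ne a x with rfl | hax <;> rcases eq_or_ne a y with rfl | hay <;>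
    simp_all [Set.mem_symmDiff]

lemma sd_pair_not_mem {F : Set α} {x y : α} (hx : x ∉ F) (hy : y ∈ F) :
    F ∆ ({x, y} : Set α) = insert x F \ {y} := by
  ext a
  rcases eq_or_ne a x with rfl | hax <;> rcases eq_or_ne a y with rfl | hay <;>
    simp_all [Set.mem_symmDiff]

lemma sd_single_mem {F : Set α} {x : α} (hx : x ∈ F) :
    F ∆ ({x, x} : Set α) = F \ {x} := by
  simpa using sd_pair_mem_mem hx hx

lemma sd_single_not {F : Set α} {x : α} (hx : x ∉ F) :
    F ∆ ({x, x} : Set α) = insert x F := by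
  ext a
  rcases eq_or_ne a x with rfl | hax <;> simp_all [Set.mem_symmDiff]

lemma DeltaMatroid.feasible_finite_s17 (D : DeltaMatroid α) : D.Feasible.Finite :=
  D.ground_finite.finite_subsets.subset fun F hF => D.subset_ground F hF

lemma DeltaMatroid.mem_finite (D : DeltaMatroid α) {F : Set α} (hF : F ∈ D.Feasible) :
    F.Finite := D.ground_finite.subset (D.subset_ground F hF)

lemma DeltaMatroid.exists_lowerBase_s17 (D : DeltaMatroid α) : ∃ B, D.LowerBase B := by
  obtain ⟨B, hB, hmin⟩ :=
    Set.exists_min_image D.Feasible Set.ncard D.feasible_finite_s17 D.feasible_nonempty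
  exact ⟨B, hB, hmin⟩

lemma DeltaMatroid.exists_upperBase_s17 (D : DeltaMatroid α) : ∃ B, D.UpperBase B := by
  obtain ⟨B, hB, hmax⟩ :=
    Set.exists_max_image D.Feasible Set.ncard D.feasible_finite_s17 D.feasible_nonempty
  exact ⟨B, hB, hmax⟩

/-- Every feasible set contains a lower base. -/
lemma DeltaMatroid.exists_lowerBase_subset_s17 (D : DeltaMatroid α) {F : Set α}
    (hF : F ∈ D.Feasible) : ∃ L, D.LowerBase L ∧ L ⊆ F := by
  have hne : {L | D.LowerBase L}.Nonempty := D.exists_lowerBase_s17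
  have hfin : {L | D.LowerBase L}.Finite :=
    D.feasible_finite_s17.subset fun L hL => hL.1
  obtain ⟨L, hL, hmax⟩ :=
    Set.exists_max_image {L | D.LowerBase L} (fun L => (L ∩ F).ncard) hfin hne
  refine ⟨L, hL, ?_⟩
  by_contra hnot
  obtain ⟨x, hxL, hxF⟩ := not_subset.mp hnot
  have hx : x ∈ L ∆ F := Or.inl ⟨hxL, hxF⟩
  obtain ⟨y, hy, hfeas⟩ := D.exchange hL.1 hF x hx
  have hLfin : L.Finite := D.mem_finite hL.1
  by_cases hyL : y ∈ L
  · rw [sd_pair_mem_mem hxL hyL] at hfeas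
    have hss : L \ {x, y} ⊂ L := ⟨diff_subset, fun h => (h hxL).2 (Or.inl rfl)⟩
    exact absurd (hL.2 _ hfeas) (not_le.mpr (Set.ncard_lt_ncard hss hLfin))
  · have hyF : y ∈ F := by rcases hy with ⟨h1, _⟩ | ⟨h1, _⟩ <;> tauto
    rw [sd_pair_mem_not hxL hyL] at hfeas
    have hcard : (insert y (L \ {x})).ncard = L.ncard := by
      rw [Set.ncard_insert_of_notMem (fun h => hyL h.1) (hLfin.diff),
        Set.ncard_diff_singleton_of_mem hxL]
      have : 0 < L.ncard := (Set.ncard_pos hLfin).mpr ⟨x, hxL⟩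
      omega
    have hLB : D.LowerBase (insert y (L \ {x})) :=
      ⟨hfeas, fun F' hF' => by rw [hcard]; exact hL.2 F' hF'⟩
    have hmono : (L ∩ F) ⊆ ((insert y (L \ {x})) ∩ F) \ {y} := by
      rintro a ⟨haL, haF⟩
      have hax : a ≠ x := fun h => hxF (h ▸ haF)
      have hay : a ≠ y := fun h => hyL (h ▸ haL)
      exact ⟨⟨Or.inr ⟨haL, hax⟩, haF⟩, hay⟩
    have hlt : (L ∩ F).ncard < ((insert y (L \ {x})) ∩ F).ncard := by
      have hyi : y ∈ (insert y (L \ {x})) ∩ F := ⟨mem_insert y _, hyF⟩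
      have hfin2 : ((insert y (L \ {x})) ∩ F).Finite :=
        ((hLfin.diff).insert y).inter_of_left F
      calc (L ∩ F).ncard ≤ (((insert y (L \ {x})) ∩ F) \ {y}).ncard :=
            Set.ncard_le_ncard hmono (hfin2.diff)
        _ < ((insert y (L \ {x})) ∩ F).ncard := by
            rw [Set.ncard_diff_singleton_of_mem hyi]
            have : 0 < ((insert y (L \ {x})) ∩ F).ncard := (Set.ncard_pos hfin2).mpr ⟨y, hyi⟩
            omega
    exact absurd (hmax _ hLB) (not_le.mpr hlt)

/-- The lower bases satisfy the matroid base-exchange property. -/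
lemma DeltaMatroid.lowerBase_exchange (D : DeltaMatroid α) :
    Matroid.ExchangeProperty D.LowerBase := by
  intro B₁ B₂ h₁ h₂ a ha
  have hx : a ∈ B₁ ∆ B₂ := Or.inl ha
  obtain ⟨y, hy, hfeas⟩ := D.exchange h₁.1 h₂.1 a hx
  have hfin : B₁.Finite := D.mem_finite h₁.1
  by_cases hyB : y ∈ B₁
  · exfalso
    rw [sd_pair_mem_mem ha.1 hyB] at hfeas
    have hss : B₁ \ {a, y} ⊂ B₁ := ⟨diff_subset, fun h => (h ha.1).2 (Or.inl rfl)⟩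
    exact absurd (h₁.2 _ hfeas) (not_le.mpr (Set.ncard_lt_ncard hss hfin))
  · have hyB₂ : y ∈ B₂ := by rcases hy with ⟨h1, _⟩ | ⟨h1, _⟩ <;> tauto
    rw [sd_pair_mem_not ha.1 hyB] at hfeas
    have hcard : (insert y (B₁ \ {a})).ncard = B₁.ncard := by
      rw [Set.ncard_insert_of_notMem (fun h => hyB h.1) (hfin.diff),
        Set.ncard_diff_singleton_of_mem ha.1]
      have : 0 < B₁.ncard := (Set.ncard_pos hfin).mpr ⟨a, ha.1⟩
      omega
    exact ⟨y, ⟨hyB₂, hyB⟩, hfeas, fun F hF => by rw [hcard]; exact h₁.2 F hF⟩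

variable {M : Matroid α}

lemma compl_insert_diff_eq {F₁ : Set α} (hE1 : F₁ ⊆ M.E) {x : α} (hx1 : x ∈ F₁) :
    M.E \ insert x (M.E \ F₁) = F₁ \ {x} := by
  ext a
  have haE : a ∈ F₁ → a ∈ M.E := fun h => hE1 h
  rcases eq_or_ne a x with rfl | hax <;> simp_all <;> tauto

lemma matroid_spanningA (hfin : M.E.Finite) {F₁ F₂ : Set α}
    (h₁ : M.Spanning F₁) (h₂ : M.Spanning F₂) {x : α} (hx1 : x ∈ F₁) (hx2 : x ∉ F₂) :
    M.Spanning (F₁ \ {x}) ∨ ∃ y ∈ F₂ \ F₁, M.Spanning (insert y (F₁ \ {x})) := by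
  have hE1 : F₁ ⊆ M.E := h₁.subset_ground
  have hE2 : F₂ ⊆ M.E := h₂.subset_ground
  have hxE : x ∈ M.E := hE1 hx1
  have hI₁ : M✶.Indep (M.E \ F₁) :=
    Matroid.coindep_def.mp ((Matroid.spanning_iff_compl_coindep hE1).mp h₁)
  have hI₂ : M✶.Indep (M.E \ F₂) :=
    Matroid.coindep_def.mp ((Matroid.spanning_iff_compl_coindep hE2).mp h₂)
  have hxI₁ : x ∉ M.E \ F₁ := fun h => h.2 hx1
  have hxI₂ : x ∈ M.E \ F₂ := ⟨hxE, hx2⟩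
  have hsubE : insert x (M.E \ F₁) ⊆ M.E := insert_subset hxE diff_subset
  by_cases hins : M✶.Indep (insert x (M.E \ F₁))
  · left
    have hsp := (Matroid.coindep_iff_compl_spanning hsubE).mp (Matroid.coindep_def.mpr hins)
    rwa [compl_insert_diff_eq hE1 hx1] at hsp
  · right
    have hKsub : insert x ((M.E \ F₁) ∩ (M.E \ F₂)) ⊆ M.E \ F₂ :=
      insert_subset hxI₂ inter_subset_right
    have hK : M✶.Indep (insert x ((M.E \ F₁) ∩ (M.E \ F₂))) := hI₂.subset hKsub
    have hground : insert x (M.E \ F₁) ⊆ M✶.E := by rwa [Matroid.dual_ground]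
    obtain ⟨K', hK'b, hKK'⟩ := Matroid.Indep.subset_isBasis_of_subset hK
      (insert_subset_insert inter_subset_left) hground
    obtain ⟨K'', hK''b, hIK''⟩ := Matroid.Indep.subset_isBasis_of_subset hI₁ (subset_insert x _) hground
    have hK''I₁ : K'' = M.E \ F₁ := by
      refine subset_antisymm (fun a ha => ?_) hIK''
      rcases hK''b.subset ha with rfl | h
      · exact absurd (hK''b.indep.subset (insert_subset ha hIK'')) hins
      · exact h
    have hcard : K'.encard = (M.E \ F₁).encard := by
      rw [← hK''I₁]; exact hK'b.encard_eq_encard hK''b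
    have hxK' : x ∈ K' := hKK' (mem_insert x _)
    have hK'sub : K' ⊆ insert x (M.E \ F₁) := hK'b.subset
    have hIy : ∃ y, y ∈ M.E \ F₁ ∧ y ∉ K' := by
      by_contra h
      push_neg at h
      exact hins (hK'b.indep.subset (insert_subset hxK' h))
    obtain ⟨y, hyI₁, hyK'⟩ := hIy
    have hyx : y ≠ x := fun h => hxI₁ (h ▸ hyI₁)
    have hyI₂ : y ∉ M.E \ F₂ := fun h => hyK' (hKK' (mem_insert_of_mem _ ⟨hyI₁, h⟩))
    have hyF₂ : y ∈ F₂ := by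
      by_contra h; exact hyI₂ ⟨hyI₁.1, h⟩
    have hyF₁ : y ∉ F₁ := hyI₁.2
    have hfinI₁ : (M.E \ F₁).Finite := hfin.diff
    have hKeq : K' = insert x ((M.E \ F₁) \ {y}) := by
      have hsub2 : K' ⊆ insert x ((M.E \ F₁) \ {y}) := by
        intro a ha
        rcases hK'sub ha with rfl | h
        · exact mem_insert _ _
        · exact mem_insert_of_mem _ ⟨h, fun he => hyK' (he ▸ ha)⟩
      have hcard2 : (insert x ((M.E \ F₁) \ {y})).encard = K'.encard := by
        rw [hcard, Set.encard_insert_of_notMem (fun h => hxI₁ h.1),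
          Set.encard_diff_singleton_add_one hyI₁]
      exact ((hfinI₁.diff).insert x).eq_of_subset_of_encard_le' hsub2 hcard2.le
    have hind : M✶.Indep (insert x ((M.E \ F₁) \ {y})) := hKeq ▸ hK'b.indep
    have hsubE2 : insert x ((M.E \ F₁) \ {y}) ⊆ M.E :=
      insert_subset hxE (diff_subset.trans diff_subset)
    have hsp := (Matroid.coindep_iff_compl_spanning hsubE2).mp (Matroid.coindep_def.mpr hind)
    have heq : M.E \ insert x ((M.E \ F₁) \ {y}) = insert y (F₁ \ {x}) := by
      ext a
      have haE : a ∈ F₁ → a ∈ M.E := fun h => hE1 h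
      have hyE : y ∈ M.E := hyI₁.1
      rcases eq_or_ne a x with rfl | hax <;> rcases eq_or_ne a y with rfl | hay <;>
        simp_all <;> tauto
    rw [heq] at hsp
    exact ⟨y, ⟨hyF₂, hyF₁⟩, hsp⟩

lemma matroid_spanningB (hfin : M.E.Finite) {F₁ F₂ : Set α}
    (h₁ : M.Spanning F₁) (h₂ : M.Spanning F₂) (hcard : F₂.ncard ≤ F₁.ncard)
    {x : α} (hx2 : x ∈ F₂) (hx1 : x ∉ F₁) :
    ∃ y ∈ F₁ \ F₂, M.Spanning (insert x F₁ \ {y}) := by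
  have hE1 : F₁ ⊆ M.E := h₁.subset_ground
  have hE2 : F₂ ⊆ M.E := h₂.subset_ground
  have hxE : x ∈ M.E := hE2 hx2
  have hI₁ : M✶.Indep (M.E \ F₁) :=
    Matroid.coindep_def.mp ((Matroid.spanning_iff_compl_coindep hE1).mp h₁)
  have hI₂ : M✶.Indep (M.E \ F₂) :=
    Matroid.coindep_def.mp ((Matroid.spanning_iff_compl_coindep hE2).mp h₂)
  have hxI₁ : x ∈ M.E \ F₁ := ⟨hxE, hx1⟩
  have hJ : M✶.Indep ((M.E \ F₁) \ {x}) := hI₁.subset diff_subset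
  have hfin1 : (M.E \ F₁).Finite := hfin.diff
  have hfin2 : (M.E \ F₂).Finite := hfin.diff
  have hlt : ((M.E \ F₁) \ {x}).encard < (M.E \ F₂).encard := by
    rw [← (hfin1.diff).cast_ncard_eq, ← hfin2.cast_ncard_eq, Nat.cast_lt]
    have e1 : (M.E \ F₁).ncard = M.E.ncard - F₁.ncard := Set.ncard_diff hE1 (hfin.subset hE1)
    have e2 : (M.E \ F₂).ncard = M.E.ncard - F₂.ncard := Set.ncard_diff hE2 (hfin.subset hE2)
    have e3 : ((M.E \ F₁) \ {x}).ncard = (M.E \ F₁).ncard - 1 :=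
      Set.ncard_diff_singleton_of_mem hxI₁
    have h4 : 0 < (M.E \ F₁).ncard := (Set.ncard_pos hfin1).mpr ⟨x, hxI₁⟩
    have h5 : F₁.ncard ≤ M.E.ncard := Set.ncard_le_ncard hE1 hfin
    have h6 : F₂.ncard ≤ M.E.ncard := Set.ncard_le_ncard hE2 hfin
    omega
  obtain ⟨e, he, hind⟩ := hJ.augment hI₂ hlt
  have heI₂ : e ∈ M.E \ F₂ := he.1
  have hex : e ≠ x := fun h => heI₂.2 (h ▸ hx2)
  have heF₁ : e ∈ F₁ := by
    by_contra h
    exact he.2 ⟨⟨heI₂.1, h⟩, hex⟩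
  have hsubE : insert e ((M.E \ F₁) \ {x}) ⊆ M.E :=
    insert_subset heI₂.1 (diff_subset.trans diff_subset)
  have hsp := (Matroid.coindep_iff_compl_spanning hsubE).mp (Matroid.coindep_def.mpr hind)
  have heq : M.E \ insert e ((M.E \ F₁) \ {x}) = insert x F₁ \ {e} := by
    ext a
    have haE : a ∈ F₁ → a ∈ M.E := fun h => hE1 h
    have heE : e ∈ M.E := heI₂.1
    rcases eq_or_ne a x with rfl | hax <;> rcases eq_or_ne a e with rfl | hae <;>
      simp_all <;> tauto
  rw [heq] at hsp
  exact ⟨e, ⟨heF₁, heI₂.2⟩, hsp⟩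

end Aux

/-- when the upper matroid is uniform, the lower bases together with all
lower-spanning sets of intermediate cardinality form the Δ-matroid with the same lower matroid
having the maximum number of feasible sets. -/
theorem max_deltaMatroid_upper_uniform {α : Type*} (D : DeltaMatroid α) (rl ru : ℕ)
    (hu : ∀ B, D.UpperBase B ↔ B ⊆ D.E ∧ B.ncard = ru)
    (hl : ∀ B, D.LowerBase B → B.ncard = rl) :
    ∃ Dmax : DeltaMatroid α, Dmax.E = D.E ∧
      Dmax.Feasible = {A | D.LowerBase A} ∪
        {A | A ⊆ D.E ∧ rl < A.ncard ∧ A.ncard ≤ ru ∧ ∃ L, D.LowerBase L ∧ L ⊆ A} ∧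
      (∀ B, Dmax.LowerBase B ↔ D.LowerBase B) ∧
      (∀ D' : DeltaMatroid α, D'.E = D.E →
        (∀ B, D'.LowerBase B ↔ D.LowerBase B) →
        (∀ F ∈ D'.Feasible, F ⊆ D.E ∧ F.ncard ≤ ru) →
        D'.Feasible.ncard ≤ Dmax.Feasible.ncard) := by
  classical
  have hEfin := D.ground_finite
  obtain ⟨L₀, hL₀⟩ := D.exists_lowerBase_s17
  have hL₀c : L₀.ncard = rl := hl _ hL₀
  obtain ⟨Bu, hBu⟩ := D.exists_upperBase_s17
  have hBuc : Bu.ncard = ru := ((hu Bu).mp hBu).2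
  have hrlru : rl ≤ ru := by
    have h := hBu.2 L₀ hL₀.1
    omega
  set 𝓕 : Set (Set α) := {A | D.LowerBase A} ∪
      {A | A ⊆ D.E ∧ rl < A.ncard ∧ A.ncard ≤ ru ∧ ∃ L, D.LowerBase L ∧ L ⊆ A} with h𝓕
  have hchar : ∀ A, A ∈ 𝓕 ↔
      (A ⊆ D.E ∧ rl ≤ A.ncard ∧ A.ncard ≤ ru ∧ ∃ L, D.LowerBase L ∧ L ⊆ A) := by
    intro A
    constructor
    · rintro (hA | ⟨h1, h2, h3, h4⟩)
      · have hc := hl _ hA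
        exact ⟨D.subset_ground _ hA.1, hc.symm.le, by omega, A, hA, subset_rfl⟩
      · exact ⟨h1, h2.le, h3, h4⟩
    · rintro ⟨h1, h2, h3, L, hL, hLA⟩
      rcases eq_or_lt_of_le h2 with heq | hlt
      · left
        have hLc : L.ncard = rl := hl _ hL
        have : L = A := Set.eq_of_subset_of_ncard_le hLA (by omega) (hEfin.subset h1)
        exact this ▸ hL
      · exact Or.inr ⟨h1, hlt, h3, L, hL, hLA⟩
  set Ml : Matroid α := Matroid.ofIsBaseOfFinite hEfin D.LowerBase D.exists_lowerBase_s17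
    D.lowerBase_exchange (fun B hB => D.subset_ground B hB.1) with hMl
  have hMlE : Ml.E = D.E := rfl
  have hMlBase : ∀ B, Ml.IsBase B ↔ D.LowerBase B := fun B => Iff.rfl
  have hspan : ∀ A, A ⊆ D.E → (Ml.Spanning A ↔ ∃ L, D.LowerBase L ∧ L ⊆ A) := by
    intro A hA
    rw [Matroid.spanning_iff_exists_isBase_subset']
    constructor
    · rintro ⟨⟨B, hB, hBA⟩, _⟩
      exact ⟨B, (hMlBase B).mp hB, hBA⟩
    · rintro ⟨L, hL, hLA⟩
      exact ⟨⟨L, (hMlBase L).mpr hL, hLA⟩, by rw [hMlE]; exact hA⟩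
  have hMlEfin : Ml.E.Finite := by rw [hMlE]; exact hEfin
  -- the exchange axiom for 𝓕
  have hexch : SymExch 𝓕 := by
    intro F₁ hF₁ F₂ hF₂ x hx
    obtain ⟨h1E, h1lo, h1hi, L₁, hL₁, hL₁s⟩ := (hchar F₁).mp hF₁
    obtain ⟨h2E, h2lo, h2hi, L₂, hL₂, hL₂s⟩ := (hchar F₂).mp hF₂
    have h1fin : F₁.Finite := hEfin.subset h1E
    have h1span : Ml.Spanning F₁ := (hspan F₁ h1E).mpr ⟨L₁, hL₁, hL₁s⟩
    have h2span : Ml.Spanning F₂ := (hspan F₂ h2E).mpr ⟨L₂, hL₂, hL₂s⟩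
    rcases Set.mem_symmDiff.mp hx with ⟨hx1, hx2⟩ | ⟨hx2, hx1⟩
    · -- x ∈ F₁ \ F₂
      rcases matroid_spanningA hMlEfin h1span h2span hx1 hx2 with hsp | ⟨y, hy, hsp⟩
      · refine ⟨x, hx, ?_⟩
        rw [sd_single_mem hx1]
        have hsubE : F₁ \ {x} ⊆ D.E := diff_subset.trans h1E
        obtain ⟨L, hL, hLs⟩ := (hspan _ hsubE).mp hsp
        have hc : (F₁ \ {x}).ncard = F₁.ncard - 1 :=
          Set.ncard_diff_singleton_of_mem hx1
        have hge : rl ≤ (F₁ \ {x}).ncard := by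
          have h7 : L.ncard ≤ (F₁ \ {x}).ncard :=
            Set.ncard_le_ncard hLs (h1fin.diff)
          have h8 := hl _ hL
          omega
        exact (hchar _).mpr ⟨hsubE, hge, by omega, L, hL, hLs⟩
      · have hyF₁ : y ∈ F₂ := hy.1
        have hyF₂ : y ∉ F₁ := hy.2
        refine ⟨y, Set.mem_symmDiff.mpr (Or.inr ⟨hyF₁, hyF₂⟩), ?_⟩
        rw [sd_pair_mem_not hx1 hyF₂]
        have hsubE : insert y (F₁ \ {x}) ⊆ D.E :=
          insert_subset (h2E hyF₁) (diff_subset.trans h1E)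
        obtain ⟨L, hL, hLs⟩ := (hspan _ hsubE).mp hsp
        have hc : (insert y (F₁ \ {x})).ncard = F₁.ncard := by
          rw [Set.ncard_insert_of_notMem (fun h => hyF₂ h.1) (h1fin.diff),
            Set.ncard_diff_singleton_of_mem hx1]
          have : 0 < F₁.ncard := (Set.ncard_pos h1fin).mpr ⟨x, hx1⟩
          omega
        exact (hchar _).mpr ⟨hsubE, by omega, by omega, L, hL, hLs⟩
    · -- x ∈ F₂ \ F₁
      by_cases hlt : F₁.ncard < ru
      · refine ⟨x, hx, ?_⟩
        rw [sd_single_not hx1]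
        have hc : (insert x F₁).ncard = F₁.ncard + 1 :=
          Set.ncard_insert_of_notMem hx1 h1fin
        exact (hchar _).mpr ⟨insert_subset (h2E hx2) h1E, by omega, by omega,
          L₁, hL₁, hL₁s.trans (subset_insert x F₁)⟩
      · have hcard : F₂.ncard ≤ F₁.ncard := by omega
        obtain ⟨y, hy, hsp⟩ := matroid_spanningB hMlEfin h1span h2span hcard hx2 hx1
        refine ⟨y, Set.mem_symmDiff.mpr (Or.inl ⟨hy.1, hy.2⟩), ?_⟩
        rw [sd_pair_not_mem hx1 hy.1]
        have hsubE : insert x F₁ \ {y} ⊆ D.E :=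
          diff_subset.trans (insert_subset (h2E hx2) h1E)
        obtain ⟨L, hL, hLs⟩ := (hspan _ hsubE).mp hsp
        have hc : (insert x F₁ \ {y}).ncard = F₁.ncard := by
          rw [Set.ncard_diff_singleton_of_mem (mem_insert_of_mem _ hy.1),
            Set.ncard_insert_of_notMem hx1 h1fin]
          omega
        exact (hchar _).mpr ⟨hsubE, by omega, by omega, L, hL, hLs⟩
  refine ⟨⟨D.E, 𝓕, hEfin, fun F hF => ((hchar F).mp hF).1, ⟨L₀, Or.inl hL₀⟩, hexch⟩,
    rfl, rfl, ?_, ?_⟩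
  · -- lower bases agree
    intro B
    constructor
    · rintro ⟨hB𝓕, hBmin⟩
      have h1 : B.ncard ≤ L₀.ncard := hBmin L₀ (Or.inl hL₀)
      obtain ⟨hBE, hBlo, hBhi, L, hL, hLB⟩ := (hchar B).mp hB𝓕
      have hLc := hl _ hL
      have hLB' : L = B :=
        Set.eq_of_subset_of_ncard_le hLB (by omega) (hEfin.subset hBE)
      exact hLB' ▸ hL
    · intro hB
      refine ⟨Or.inl hB, ?_⟩
      intro F hF
      have h9 := ((hchar F).mp hF).2.1
      rw [hl _ hB]
      exact h9
  · -- maximality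
    intro D' hE' hlb' hF'
    have hsub : D'.Feasible ⊆ 𝓕 := by
      intro F hF
      obtain ⟨L, hL, hLF⟩ := D'.exists_lowerBase_subset_s17 hF
      have hLD : D.LowerBase L := (hlb' L).mp hL
      have hFE : F ⊆ D.E := (hF' F hF).1
      refine (hchar F).mpr ⟨hFE, ?_, (hF' F hF).2, L, hLD, hLF⟩
      rw [← hl _ hLD]
      exact Set.ncard_le_ncard hLF (hEfin.subset hFE)
    exact Set.ncard_le_ncard hsub
      (hEfin.finite_subsets.subset fun A hA => ((hchar A).mp hA).1)
end

section
/- Let D be a Δ-matroid on E whose lower matroid M_l is uniform. Let 𝓕'_max consist of all bases of the upper matroid M_u together with all sets A ⊆ E with rk(M_l) ≤ |A| < rk(M_u) that are independent in M_u. Then 𝓕'_max is the collection of feasible sets of a Δ-matroid with upper matroid M_u. -/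
open Set
open scoped symmDiff

section Aux

variable {α : Type*}

private lemma pair_sd₁ {F : Set α} {a b : α} (ha : a ∉ F) (hb : b ∈ F) :
    F ∆ ({a, b} : Set α) = insert a (F \ {b}) := by
  have hab : a ≠ b := fun h => ha (h ▸ hb)
  ext z
  simp only [Set.mem_symmDiff, Set.mem_insert_iff, Set.mem_diff, Set.mem_singleton_iff]
  rcases eq_or_ne z a with rfl | hza <;> rcases eq_or_ne z b with rfl | hzb <;> tauto

private lemma pair_sd₂ {F : Set α} {a : α} (ha : a ∈ F) :
    F ∆ ({a, a} : Set α) = F \ {a} := by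
  ext z
  simp only [Set.mem_symmDiff, Set.mem_insert_iff, Set.mem_diff, Set.mem_singleton_iff]
  rcases eq_or_ne z a with rfl | hza <;> tauto

private lemma pair_sd₃ {F : Set α} {a : α} (ha : a ∉ F) :
    F ∆ ({a, a} : Set α) = insert a F := by
  ext z
  simp only [Set.mem_symmDiff, Set.mem_insert_iff, Set.mem_singleton_iff]
  rcases eq_or_ne z a with rfl | hza <;> tauto

private lemma pair_sd₄ {F : Set α} {a b : α} (ha : a ∉ F) (hb : b ∉ F) (hab : a ≠ b) :
    F ∆ ({a, b} : Set α) = insert a (insert b F) := by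
  ext z
  simp only [Set.mem_symmDiff, Set.mem_insert_iff, Set.mem_singleton_iff]
  rcases eq_or_ne z a with rfl | hza <;> rcases eq_or_ne z b with rfl | hzb <;> tauto

private lemma compl_swap {E X : Set α} {a b : α} (hXE : X ⊆ E) (haE : a ∈ E) (hbE : b ∈ E)
    (haX : a ∈ X) (hbX : b ∉ X) :
    E \ (insert b (X \ {a})) = insert a ((E \ X) \ {b}) := by
  have hab : a ≠ b := fun h => hbX (h ▸ haX)
  ext z
  simp only [Set.mem_diff, Set.mem_insert_iff, Set.mem_singleton_iff]
  rcases eq_or_ne z a with rfl | hza <;> rcases eq_or_ne z b with rfl | hzb <;> tauto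

end Aux

/-- when the lower matroid is uniform, the upper bases together with all
upper-independent sets of intermediate cardinality form a Δ-matroid with upper matroid `Mu`. -/
theorem max_deltaMatroid_lower_uniform {α : Type*} (D : DeltaMatroid α) (rl ru : ℕ)
    (hl : ∀ B, D.LowerBase B ↔ B ⊆ D.E ∧ B.ncard = rl)
    (hu : ∀ B, D.UpperBase B → B.ncard = ru) :
    ∃ D' : DeltaMatroid α, D'.E = D.E ∧
      D'.Feasible = {A | D.UpperBase A} ∪
        {A | A ⊆ D.E ∧ rl ≤ A.ncard ∧ A.ncard < ru ∧ ∃ U, D.UpperBase U ∧ A ⊆ U} ∧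
      (∀ B, D'.UpperBase B ↔ D.UpperBase B) := by
  classical
  -- basic finiteness facts
  have hFfin : ∀ F ∈ D.Feasible, F.Finite := fun F hF =>
    D.ground_finite.subset (D.subset_ground F hF)
  have hfeas_fin : D.Feasible.Finite :=
    D.ground_finite.finite_subsets.subset fun F hF => D.subset_ground F hF
  -- existence of an upper base
  obtain ⟨U₀, hU₀f, hU₀max⟩ :=
    Set.Finite.exists_maximalFor Set.ncard D.Feasible hfeas_fin D.feasible_nonempty
  have hU₀ : D.UpperBase U₀ :=
    ⟨hU₀f, fun F hF => le_of_not_gt fun hlt => (hU₀max hF hlt.le).not_gt hlt⟩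
  have hru : U₀.ncard = ru := hu U₀ hU₀
  have hcard_le : ∀ F ∈ D.Feasible, F.ncard ≤ ru := fun F hF => hru ▸ hU₀.2 F hF
  -- existence of a lower base, and rl ≤ ru
  obtain ⟨L₀, hL₀f, hL₀min⟩ :=
    Set.Finite.exists_minimalFor Set.ncard D.Feasible hfeas_fin D.feasible_nonempty
  have hL₀ : D.LowerBase L₀ :=
    ⟨hL₀f, fun F hF => le_of_not_gt fun hlt => (hL₀min hF hlt.le).not_gt hlt⟩
  have hrl_le_ru : rl ≤ ru := by
    have h1 := ((hl L₀).1 hL₀).2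
    have h2 := hL₀.2 U₀ hU₀.1
    omega
  have hUB_of_card : ∀ F ∈ D.Feasible, F.ncard = ru → D.UpperBase F := fun F hF hc =>
    ⟨hF, fun F' hF' => (hcard_le F' hF').trans hc.ge⟩
  -- the key exchange lemma for upper bases (co-exchange form)
  have hexch : ∀ B₁ B₂, D.UpperBase B₁ → D.UpperBase B₂ → ∀ a ∈ B₂ \ B₁,
      ∃ b ∈ B₁ \ B₂, D.UpperBase (insert a (B₁ \ {b})) := by
    intro B₁ B₂ hB₁ hB₂ a ⟨haB₂, haB₁⟩
    have hB₁fin : B₁.Finite := hFfin B₁ hB₁.1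
    have hB₁c : B₁.ncard = ru := hu B₁ hB₁
    obtain ⟨y, hy, hFy⟩ := D.exchange hB₁.1 hB₂.1 a (Set.mem_symmDiff.2 (Or.inr ⟨haB₂, haB₁⟩))
    rw [Set.mem_symmDiff] at hy
    rcases hy with ⟨hy₁, hy₂⟩ | ⟨hy₂, hy₁⟩
    · -- good case : y ∈ B₁ \ B₂
      refine ⟨y, ⟨hy₁, hy₂⟩, ?_⟩
      rw [pair_sd₁ haB₁ hy₁] at hFy
      refine hUB_of_card _ hFy ?_
      have hys : 0 < B₁.ncard := (Set.ncard_pos hB₁fin).2 ⟨y, hy₁⟩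
      have hnm : a ∉ B₁ \ {y} := fun h => haB₁ h.1
      rw [Set.ncard_insert_of_notMem hnm (hB₁fin.diff),
        Set.ncard_diff_singleton_of_mem hy₁]
      omega
    · -- impossible cases : the resulting feasible set is too big
      exfalso
      rcases eq_or_ne y a with rfl | hya
      · rw [pair_sd₃ haB₁] at hFy
        have := hcard_le _ hFy
        rw [Set.ncard_insert_of_notMem haB₁ hB₁fin] at this
        omega
      · rw [pair_sd₄ haB₁ hy₁ (fun h => hya (h.symm)) ] at hFy
        have := hcard_le _ hFy
        have hbig : (insert a (insert y B₁)).ncard = B₁.ncard + 2 := by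
          rw [Set.ncard_insert_of_notMem (by
              simp only [Set.mem_insert_iff]
              rintro (h | h)
              · exact hya h.symm
              · exact haB₁ h) ((hB₁fin.insert y)),
            Set.ncard_insert_of_notMem hy₁ hB₁fin]
        omega
  -- the complement family of the upper bases is the base family of a matroid
  have hBcmem : ∀ {B}, D.UpperBase B → (D.E \ B ⊆ D.E ∧ D.UpperBase (D.E \ (D.E \ B))) := by
    intro B hB
    refine ⟨diff_subset, ?_⟩
    rwa [diff_diff_cancel_left (D.subset_ground B hB.1)]
  let Mstar : Matroid α :=
    { E := D.E
      IsBase := fun X => X ⊆ D.E ∧ D.UpperBase (D.E \ X)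
      Indep := fun I => ∃ X, (X ⊆ D.E ∧ D.UpperBase (D.E \ X)) ∧ I ⊆ X
      indep_iff' := fun I => Iff.rfl
      exists_isBase := ⟨D.E \ U₀, hBcmem hU₀⟩
      isBase_exchange := by
        rintro X Y ⟨hXE, hX⟩ ⟨hYE, hY⟩ a ⟨haX, haY⟩
        have haE : a ∈ D.E := hXE haX
        obtain ⟨b, ⟨hb₁, hb₂⟩, hb⟩ := hexch (D.E \ X) (D.E \ Y) hX hY a
          ⟨⟨haE, haY⟩, fun h => h.2 haX⟩
        have hbE : b ∈ D.E := hb₁.1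
        have hbX : b ∉ X := hb₁.2
        have hbY : b ∈ Y := by
          by_contra hbY
          exact hb₂ ⟨hbE, hbY⟩
        refine ⟨b, ⟨hbY, hbX⟩, insert_subset hbE ((diff_subset.trans hXE)), ?_⟩
        rwa [compl_swap hXE haE hbE haX hbX]
      maximality := by
        intro X hXE I hI hIX
        have hSfin : {J | (∃ X, (X ⊆ D.E ∧ D.UpperBase (D.E \ X)) ∧ J ⊆ X) ∧ I ⊆ J ∧ J ⊆ X}.Finite :=
          D.ground_finite.finite_subsets.subset fun J hJ => hJ.2.2.trans hXE
        obtain ⟨J, hJ, hJmax⟩ := Set.Finite.exists_maximalFor Set.ncard _ hSfin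
          ⟨I, hI, subset_rfl, hIX⟩
        refine ⟨J, hJ.2.1, ⟨⟨hJ.1, hJ.2.2⟩, ?_⟩⟩
        intro K hK hJK
        have hKfin : K.Finite := D.ground_finite.subset (hK.2.trans hXE)
        have hKmem : K ∈ {J | (∃ X, (X ⊆ D.E ∧ D.UpperBase (D.E \ X)) ∧ J ⊆ X) ∧ I ⊆ J ∧ J ⊆ X} :=
          ⟨hK.1, hJ.2.1.trans hJK, hK.2⟩
        have hle := hJmax hKmem (Set.ncard_le_ncard hJK hKfin)
        exact (Set.eq_of_subset_of_ncard_le hJK hle hKfin).ge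
      subset_ground := fun B hB => hB.1 }
  set Mu : Matroid α := Mstar✶ with hMu
  have hMuB : ∀ B, Mu.IsBase B ↔ D.UpperBase B := by
    intro B
    rw [hMu, Matroid.dual_isBase_iff']
    constructor
    · rintro ⟨⟨-, hB⟩, hBE⟩
      rwa [diff_diff_cancel_left hBE] at hB
    · intro hB
      have hBE : B ⊆ D.E := D.subset_ground B hB.1
      exact ⟨⟨diff_subset, by rwa [diff_diff_cancel_left hBE]⟩, hBE⟩
  have hMuI : ∀ I, Mu.Indep I ↔ ∃ W, D.UpperBase W ∧ I ⊆ W := by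
    intro I
    rw [Matroid.indep_iff]
    exact exists_congr fun B => and_congr_left' (hMuB B)
  have hIndfin : ∀ I, Mu.Indep I → I.Finite := by
    intro I hI
    obtain ⟨W, hW, hIW⟩ := (hMuI I).1 hI
    exact D.ground_finite.subset (hIW.trans (D.subset_ground W hW.1))
  -- augmentation, cardinality form
  have haug : ∀ I J, Mu.Indep I → Mu.Indep J → I.ncard < J.ncard →
      ∃ e ∈ J \ I, Mu.Indep (insert e I) := by
    intro I J hI hJ hc
    refine hI.augment hJ ?_
    rw [← Set.Finite.cast_ncard_eq (hIndfin I hI), ← Set.Finite.cast_ncard_eq (hIndfin J hJ)]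
    exact_mod_cast hc
  -- weak circuit elimination
  have hL2 : ∀ I J x, Mu.Indep I → Mu.Indep J → x ∈ J → x ∉ I → ¬ Mu.Indep (insert x I) →
      ∃ y ∈ I \ J, Mu.Indep (insert x I \ {y}) := by
    intro I J x hI hJ hxJ hxI hdep
    have hIE : I ⊆ Mu.E := hI.subset_ground
    have hxE : x ∈ Mu.E := hJ.subset_ground hxJ
    have hXE : insert x I ⊆ Mu.E := insert_subset hxE hIE
    have hK : Mu.Indep (insert x (I ∩ J)) := hJ.subset (insert_subset hxJ inter_subset_right)
    obtain ⟨B', hB', hKB'⟩ := hK.subset_isBasis_of_subset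
      (insert_subset_insert inter_subset_left) hXE
    have hIbasis : Mu.IsBasis I (insert x I) := by
      rw [Matroid.isBasis_iff]
      refine ⟨hI, subset_insert _ _, fun J' hJ' hIJ' hJ'X => ?_⟩
      by_contra hne
      have hxJ' : x ∈ J' := by
        by_contra hxJ'
        exact hne (hIJ'.antisymm fun z hz => (hJ'X hz).elim
          (fun h => absurd (h ▸ hz) hxJ') id)
      exact hdep (hJ'.subset (insert_subset hxJ' hIJ'))
    have hcard := hB'.encard_eq_encard hIbasis
    have hxB' : x ∈ B' := hKB' (mem_insert _ _)
    have hIfin : I.Finite := hIndfin I hI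
    have h1 : ((insert x I) \ B').encard = 1 := by
      have h2 := Set.encard_diff_add_encard_of_subset hB'.subset
      rw [hcard, Set.encard_insert_of_notMem hxI] at h2
      have h3 : ((insert x I) \ B').encard + I.encard = 1 + I.encard := by
        rw [h2, add_comm]
      exact WithTop.add_right_cancel (Set.encard_ne_top_iff.2 hIfin) h3
    obtain ⟨y, hy⟩ := Set.encard_eq_one.1 h1
    have hymem : y ∈ insert x I \ B' := by rw [hy]; exact rfl
    have hyx : y ≠ x := fun h => hymem.2 (h ▸ hxB')
    have hyI : y ∈ I := (hymem.1.resolve_left hyx)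
    have hyJ : y ∉ J := fun h => hymem.2 (hKB' (mem_insert_of_mem _ ⟨hyI, h⟩))
    refine ⟨y, ⟨hyI, hyJ⟩, hB'.indep.subset ?_⟩
    intro z hz
    by_contra hzB'
    have : z ∈ insert x I \ B' := ⟨hz.1, hzB'⟩
    rw [hy] at this
    exact hz.2 this
  -- the new feasible family
  set Feas : Set (Set α) := {A | D.UpperBase A} ∪
      {A | A ⊆ D.E ∧ rl ≤ A.ncard ∧ A.ncard < ru ∧ ∃ U, D.UpperBase U ∧ A ⊆ U} with hFeasdef
  have hchar : ∀ A, A ∈ Feas ↔ (rl ≤ A.ncard ∧ Mu.Indep A) := by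
    intro A
    constructor
    · rintro (hA | ⟨hAE, h1, h2, W, hW, hAW⟩)
      · exact ⟨by rw [hu A hA]; exact hrl_le_ru, (hMuI A).2 ⟨A, hA, subset_rfl⟩⟩
      · exact ⟨h1, (hMuI A).2 ⟨W, hW, hAW⟩⟩
    · rintro ⟨hrlA, hAind⟩
      obtain ⟨W, hW, hAW⟩ := (hMuI A).1 hAind
      have hWfin : W.Finite := hFfin W hW.1
      have hAle : A.ncard ≤ ru := (Set.ncard_le_ncard hAW hWfin).trans (hu W hW).le
      rcases eq_or_lt_of_le hAle with heq | hlt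
      · left
        have hA : A = W := Set.eq_of_subset_of_ncard_le hAW (by rw [hu W hW, heq]) hWfin
        rw [hA]; exact hW
      · right
        exact ⟨hAW.trans (D.subset_ground W hW.1), hrlA, hlt, W, hW, hAW⟩
  -- symmetric exchange for the new family
  have hSE : SymExch Feas := by
    intro F₁ hF₁ F₂ hF₂ x hx
    obtain ⟨h₁, hI₁⟩ := (hchar F₁).1 hF₁
    obtain ⟨h₂, hI₂⟩ := (hchar F₂).1 hF₂
    have hF₁fin : F₁.Finite := hIndfin F₁ hI₁
    rw [Set.mem_symmDiff] at hx
    rcases hx with ⟨hx₁, hx₂⟩ | ⟨hx₂, hx₁⟩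
    · rcases lt_or_eq_of_le h₁ with hlt | heq
      · refine ⟨x, Set.mem_symmDiff.2 (Or.inl ⟨hx₁, hx₂⟩), ?_⟩
        rw [pair_sd₂ hx₁]
        refine (hchar _).2 ⟨?_, hI₁.subset diff_subset⟩
        rw [Set.ncard_diff_singleton_of_mem hx₁]
        omega
      · have hxpos : 0 < F₁.ncard := (Set.ncard_pos hF₁fin).2 ⟨x, hx₁⟩
        have hIdx : Mu.Indep (F₁ \ {x}) := hI₁.subset diff_subset
        have hcard' : (F₁ \ {x}).ncard < F₂.ncard := by
          rw [Set.ncard_diff_singleton_of_mem hx₁]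
          omega
        obtain ⟨e, he, hins⟩ := haug _ _ hIdx hI₂ hcard'
        have hex : e ≠ x := fun h => hx₂ (h ▸ he.1)
        have heF₁ : e ∉ F₁ := fun h => he.2 ⟨h, hex⟩
        refine ⟨e, Set.mem_symmDiff.2 (Or.inr ⟨he.1, heF₁⟩), ?_⟩
        rw [Set.pair_comm, pair_sd₁ heF₁ hx₁]
        refine (hchar _).2 ⟨?_, hins⟩
        rw [Set.ncard_insert_of_notMem he.2 (hF₁fin.diff),
          Set.ncard_diff_singleton_of_mem hx₁]
        omega
    · by_cases hins : Mu.Indep (insert x F₁)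
      · refine ⟨x, Set.mem_symmDiff.2 (Or.inr ⟨hx₂, hx₁⟩), ?_⟩
        rw [pair_sd₃ hx₁]
        refine (hchar _).2 ⟨h₁.trans (Set.ncard_le_ncard (subset_insert _ _)
          (hF₁fin.insert x)), hins⟩
      · obtain ⟨y, ⟨hyF₁, hyF₂⟩, hind⟩ := hL2 F₁ F₂ x hI₁ hI₂ hx₂ hx₁ hins
        refine ⟨y, Set.mem_symmDiff.2 (Or.inl ⟨hyF₁, hyF₂⟩), ?_⟩
        have hxy : x ≠ y := fun h => hx₁ (h ▸ hyF₁)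
        rw [pair_sd₁ hx₁ hyF₁, Set.insert_diff_singleton_comm hxy]
        refine (hchar _).2 ⟨?_, hind⟩
        rw [Set.ncard_diff_singleton_of_mem (mem_insert_of_mem _ hyF₁),
          Set.ncard_insert_of_notMem hx₁ hF₁fin]
        omega
  -- subset of ground and nonempty
  have hsub : ∀ F ∈ Feas, F ⊆ D.E := by
    intro F hF
    obtain ⟨-, hFI⟩ := (hchar F).1 hF
    obtain ⟨W, hW, hFW⟩ := (hMuI F).1 hFI
    exact hFW.trans (D.subset_ground W hW.1)
  have hFle : ∀ F ∈ Feas, F.ncard ≤ ru := by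
    intro F hF
    obtain ⟨-, hFI⟩ := (hchar F).1 hF
    obtain ⟨W, hW, hFW⟩ := (hMuI F).1 hFI
    exact (Set.ncard_le_ncard hFW (hFfin W hW.1)).trans (hu W hW).le
  refine ⟨⟨D.E, Feas, D.ground_finite, hsub, ⟨U₀, Or.inl hU₀⟩, hSE⟩, rfl, rfl, ?_⟩
  intro B
  constructor
  · intro hB
    have hBF : B ∈ Feas := hB.1
    have hBru : B.ncard = ru :=
      le_antisymm (hFle B hBF) (by rw [← hru]; exact hB.2 U₀ (Or.inl hU₀))
    rcases hBF with h | h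
    · exact h
    · exact absurd h.2.2.1 (by rw [hBru]; exact lt_irrefl ru)
  · intro hB
    refine ⟨Or.inl hB, fun F hF => ?_⟩
    rw [hu B hB]
    exact hFle F hF
end
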